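/- arXiv:2106.14215 — 7 statements merged into one kernel-verified Lean document; each statement's English description precedes it below -/
import Mathlib

section
/- Let N and r be integers with r < N/2 and let S ∈ ℝ^N. Then rank T_{r+1}(S) = r if and only if rank T_L(S) = r for every window length L satisfying min(L, N−L+1) > r. -/
open Matrix

/-- The Hankel trajectory matrix `T_L(S)` of a series `S ∈ ℝ^N`:
entries `(T_L(S))_{ij} = s_{i+j-1}` (1-based), i.e. `S (i+j)` in 0-based indexing. -/
def traj (N L : ℕ) (S : Fin N → ℝ) : Matrix (Fin L) (Fin (N + 1 - L)) ℝ :=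
  Matrix.of fun i j => S ⟨i.1 + j.1, by have := i.2; have := j.2; omega⟩

open Module

/-- Appending a zero at the end, as a linear map. -/
def snocLM (K : ℕ) : (Fin K → ℝ) →ₗ[ℝ] (Fin (K + 1) → ℝ) where
  toFun v := Fin.snoc v 0
  map_add' v w := by
    funext i
    refine Fin.lastCases ?_ (fun j => ?_) i <;>
      simp [Fin.snoc_last, Fin.snoc_castSucc]
  map_smul' c v := by
    funext i
    refine Fin.lastCases ?_ (fun j => ?_) i <;>
      simp [Fin.snoc_last, Fin.snoc_castSucc]

lemma core {K : ℕ} (V : Submodule ℝ (Fin K → ℝ)) (hV : V ≠ ⊥)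
    (W : Submodule ℝ (Fin (K + 1) → ℝ))
    (hE : ∀ v ∈ V, (Fin.snoc v 0 : Fin (K + 1) → ℝ) ∈ W)
    (hF : ∀ v ∈ V, (Fin.cons 0 v : Fin (K + 1) → ℝ) ∈ W) :
    finrank ℝ V + 1 ≤ finrank ℝ W := by
  by_contra hcon
  push_neg at hcon
  have hinj : Function.Injective (snocLM K) := by
    intro v w h
    funext i
    have := congrFun h (Fin.castSucc i)
    simpa [snocLM, Fin.snoc_castSucc] using this
  have hAW : V.map (snocLM K) ≤ W := by
    rintro x ⟨v, hv, rfl⟩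
    exact hE v hv
  have hfr : finrank ℝ (V.map (snocLM K)) = finrank ℝ V :=
    (LinearEquiv.finrank_eq (Submodule.equivMapOfInjective _ hinj V)).symm
  have hWA : W = V.map (snocLM K) :=
    (Submodule.eq_of_le_of_finrank_le hAW (by omega)).symm
  have hshift : ∀ v ∈ V, ∃ w ∈ V, (Fin.snoc w 0 : Fin (K + 1) → ℝ) = Fin.cons 0 v := by
    intro v hv
    have hmem : (Fin.cons 0 v : Fin (K + 1) → ℝ) ∈ V.map (snocLM K) := hWA ▸ hF v hv
    obtain ⟨w, hw, hwe⟩ := hmem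
    exact ⟨w, hw, hwe⟩
  have hlast : ∀ v ∈ V, ∀ i : Fin K, i.1 + 1 = K → v i = 0 := by
    intro v hv i hK
    obtain ⟨w, hw, hwe⟩ := hshift v hv
    have h1 := congrFun hwe (Fin.last K)
    rw [Fin.snoc_last] at h1
    have h2 : Fin.last K = Fin.succ i := by
      apply Fin.ext; simp [hK]
    rw [h2, Fin.cons_succ] at h1
    exact h1.symm
  have hzero : ∀ t, ∀ v ∈ V, ∀ i : Fin K, K ≤ i.1 + 1 + t → v i = 0 := by
    intro t
    induction t with
    | zero =>
      intro v hv i hi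
      exact hlast v hv i (by have := i.2; omega)
    | succ t ih =>
      intro v hv i hi
      by_cases hK : i.1 + 1 = K
      · exact hlast v hv i hK
      · have hi1 : i.1 + 1 < K := by have := i.2; omega
        obtain ⟨w, hw, hwe⟩ := hshift v hv
        have h1 := congrFun hwe (Fin.castSucc ⟨i.1 + 1, hi1⟩)
        rw [Fin.snoc_castSucc] at h1
        have h2 : Fin.castSucc (⟨i.1 + 1, hi1⟩ : Fin K) = Fin.succ i := by
          apply Fin.ext; simp
        rw [h2, Fin.cons_succ] at h1
        have h3 := ih w hw ⟨i.1 + 1, hi1⟩ (by simp; omega)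
        rw [← h1]
        exact h3
  apply hV
  rw [Submodule.eq_bot_iff]
  intro v hv
  funext i
  have h2 := i.2
  exact hzero K v hv i (by omega)

/-- Key step: if `M` (size `a × (b+1)`) and `M'` (size `(a+1) × b`) are Hankel
matrices of the same sequence and `M'` has nontrivial kernel, then `rank M ≤ rank M'`. -/
lemma key {a b : ℕ} (M : Matrix (Fin a) (Fin (b + 1)) ℝ) (M' : Matrix (Fin (a + 1)) (Fin b) ℝ)
    (hc : ∀ (i : Fin a) (j : Fin (b + 1)) (i' : Fin (a + 1)) (j' : Fin b),
      i.1 + j.1 = i'.1 + j'.1 → M i j = M' i' j')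
    (hr : M'.rank < b) : M.rank ≤ M'.rank := by
  have rn : M.rank + finrank ℝ (LinearMap.ker M.mulVecLin) = b + 1 := by
    have h := LinearMap.finrank_range_add_finrank_ker M.mulVecLin
    rwa [Module.finrank_fin_fun] at h
  have rn' : M'.rank + finrank ℝ (LinearMap.ker M'.mulVecLin) = b := by
    have h := LinearMap.finrank_range_add_finrank_ker M'.mulVecLin
    rwa [Module.finrank_fin_fun] at h
  have hV : LinearMap.ker M'.mulVecLin ≠ ⊥ := by
    intro h
    rw [h, finrank_bot] at rn'
    omega
  have hstep : finrank ℝ (LinearMap.ker M'.mulVecLin) + 1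
      ≤ finrank ℝ (LinearMap.ker M.mulVecLin) := by
    apply core _ hV
    · intro v hv
      rw [LinearMap.mem_ker] at hv ⊢
      have hv' : ∀ i', (M' *ᵥ v) i' = 0 := fun i' => congrFun hv i'
      funext i
      show (M *ᵥ Fin.snoc v 0) i = 0
      have : (M *ᵥ Fin.snoc v 0) i = ∑ j : Fin b, M' (Fin.castSucc i) j * v j := by
        rw [Matrix.mulVec, dotProduct, Fin.sum_univ_castSucc]
        simp only [Fin.snoc_castSucc, Fin.snoc_last, mul_zero, add_zero]
        exact Finset.sum_congr rfl fun j _ => by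
          rw [hc i (Fin.castSucc j) (Fin.castSucc i) j (by simp)]
      rw [this]
      simpa [Matrix.mulVec, dotProduct] using hv' (Fin.castSucc i)
    · intro v hv
      rw [LinearMap.mem_ker] at hv ⊢
      have hv' : ∀ i', (M' *ᵥ v) i' = 0 := fun i' => congrFun hv i'
      funext i
      show (M *ᵥ Fin.cons 0 v) i = 0
      have : (M *ᵥ Fin.cons 0 v) i = ∑ j : Fin b, M' (Fin.succ i) j * v j := by
        rw [Matrix.mulVec, dotProduct, Fin.sum_univ_succ]
        simp only [Fin.cons_zero, Fin.cons_succ, mul_zero, zero_add]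
        exact Finset.sum_congr rfl fun j _ => by
          rw [hc i (Fin.succ j) (Fin.succ i) j (by simp; omega)]
      rw [this]
      simpa [Matrix.mulVec, dotProduct] using hv' (Fin.succ i)
  omega


lemma rank_reindex' {k l m n : ℕ} (e₁ : Fin k ≃ Fin m) (e₂ : Fin l ≃ Fin n)
    (A : Matrix (Fin k) (Fin l) ℝ) :
    (Matrix.reindex e₁ e₂ A).rank = A.rank := by
  rw [Matrix.rank, Matrix.rank, Matrix.mulVecLin_reindex, LinearMap.range_comp,
    LinearMap.range_comp, LinearEquiv.range, Submodule.map_top, LinearEquiv.finrank_map_eq]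

lemma rank_submatrix' {k l m n : ℕ} (A : Matrix (Fin k) (Fin l) ℝ)
    (e₁ : Fin m ≃ Fin k) (e₂ : Fin n ≃ Fin l) :
    (A.submatrix e₁ e₂).rank = A.rank := by
  simpa only [Matrix.reindex_apply, Equiv.symm_symm] using rank_reindex' e₁.symm e₂.symm A

lemma mono_right (N L : ℕ) (S : Fin N → ℝ) (hL : L + 1 ≤ N)
    (h' : (traj N (L + 1) S).rank < N - L) :
    (traj N L S).rank ≤ (traj N (L + 1) S).rank := by
  have e1 : N + 1 - L = (N - L) + 1 := by omega
  have e2 : N + 1 - (L + 1) = N - L := by omega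
  have r1 : ((traj N L S).submatrix (Equiv.refl (Fin L)) (finCongr e1).symm).rank
      = (traj N L S).rank := rank_submatrix' _ _ _
  have r2 : ((traj N (L + 1) S).submatrix (Equiv.refl (Fin (L + 1))) (finCongr e2).symm).rank
      = (traj N (L + 1) S).rank := rank_submatrix' _ _ _
  have hkey := key ((traj N L S).submatrix (Equiv.refl (Fin L)) (finCongr e1).symm)
    ((traj N (L + 1) S).submatrix (Equiv.refl (Fin (L + 1))) (finCongr e2).symm)
    (fun i j i' j' hij => by
      simp only [Matrix.submatrix_apply, traj, Matrix.of_apply, Equiv.coe_refl, id]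
      congr 1
      apply Fin.ext
      simpa using hij)
    (by rw [r2]; exact h')
  rw [r1, r2] at hkey
  exact hkey

lemma mono_left (N L : ℕ) (S : Fin N → ℝ) (hL : L + 1 ≤ N)
    (h' : (traj N L S).rank < L) :
    (traj N (L + 1) S).rank ≤ (traj N L S).rank := by
  have e1 : N + 1 - L = (N + 1 - (L + 1)) + 1 := by omega
  have r1 : ((traj N (L + 1) S)ᵀ).rank = (traj N (L + 1) S).rank := Matrix.rank_transpose _
  have r2 : (((traj N L S)ᵀ).submatrix (finCongr e1).symm (Equiv.refl (Fin L))).rank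
      = (traj N L S).rank := by
    rw [rank_submatrix', Matrix.rank_transpose]
  have hkey := key (a := N + 1 - (L + 1)) (b := L) ((traj N (L + 1) S)ᵀ)
    (((traj N L S)ᵀ).submatrix (finCongr e1).symm (Equiv.refl (Fin L)))
    (fun i j i' j' hij => by
      simp only [Matrix.submatrix_apply, Matrix.transpose_apply, traj, Matrix.of_apply,
        Equiv.coe_refl, id]
      congr 1
      apply Fin.ext
      simpa using by omega : _)
    (by rw [r2]; exact h')
  rw [r1, r2] at hkey
  exact hkey

/-- for `r < N/2`, `rank T_{r+1}(S) = r` iff `rank T_L(S) = r` for every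
window length `L` with `min(L, N-L+1) > r`. -/
theorem stmt0 (N r : ℕ) (hr : 2 * r < N) (S : Fin N → ℝ) :
    (traj N (r + 1) S).rank = r ↔
      ∀ L : ℕ, r < min L (N + 1 - L) → (traj N L S).rank = r := by
  constructor
  · intro h0
    have up : ∀ L, r + 1 ≤ L → L ≤ N → (traj N L S).rank ≤ r := by
      intro L hL
      induction L, hL using Nat.le_induction with
      | base => intro _; exact le_of_eq h0
      | succ L hL ih =>
        intro hLN
        have h1 : L ≤ N := by omega
        have h2 := ih h1
        have h3 := mono_left N L S hLN (by omega)
        omega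
    have low : ∀ L, r + 1 ≤ L → L + r ≤ N → r ≤ (traj N L S).rank := by
      intro L hL
      induction L, hL using Nat.le_induction with
      | base => intro _; omega
      | succ L hL ih =>
        intro hLN
        have h2 := ih (by omega)
        have hup := up (L + 1) (by omega) (by omega)
        have h3 := mono_right N L S (by omega) (by omega)
        omega
    intro L hLmin
    have h1 : r + 1 ≤ L ∧ L + r ≤ N := by omega
    exact le_antisymm (up L h1.1 (by omega)) (low L h1.1 h1.2)
  · intro h
    exact h (r + 1) (by omega)
end

section
/- Let N and r be integers with 2r < N and let D_r = {Y ∈ ℝ^N : rank T_{r+1}(Y) = r}. Then the closure of D_r in ℝ^N equals {Y ∈ ℝ^N : rank T_{r+1}(Y) ≤ r}, which in turn equals the set {Y ∈ ℝ^N : ∃ a ∈ ℝ^{r+1}, a ≠ 0, a^T T_{r+1}(Y) = 0^T}, i.e., the set of series governed by some generalized linear recurrence relation (GLRR) of order r. -/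
open Matrix

open Module Polynomial Filter

section Helpers

variable {r c : ℕ}


lemma rank_add_ker (M : Matrix (Fin (r+1)) (Fin c) ℝ) :
    M.rank + finrank ℝ (LinearMap.ker (Mᵀ.mulVecLin)) = r + 1 := by
  have h := LinearMap.finrank_range_add_finrank_ker (Mᵀ.mulVecLin)
  rw [Module.finrank_fin_fun] at h
  rw [← Matrix.rank_transpose]
  exact h

lemma mem_ker_iff (M : Matrix (Fin (r+1)) (Fin c) ℝ) (x : Fin (r+1) → ℝ) :
    x ∈ LinearMap.ker (Mᵀ.mulVecLin) ↔ vecMul x M = 0 := by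
  rw [LinearMap.mem_ker, Matrix.mulVecLin_apply, Matrix.mulVec_transpose]

lemma rank_le_iff_exists (M : Matrix (Fin (r+1)) (Fin c) ℝ) :
    M.rank ≤ r ↔ ∃ a : Fin (r+1) → ℝ, a ≠ 0 ∧ vecMul a M = 0 := by
  constructor
  · intro h
    have hk : LinearMap.ker (Mᵀ.mulVecLin) ≠ ⊥ := by
      intro hbot
      have := rank_add_ker M
      rw [hbot, finrank_bot] at this
      omega
    obtain ⟨a, ha, ha0⟩ := Submodule.exists_mem_ne_zero_of_ne_bot hk
    exact ⟨a, ha0, (mem_ker_iff M a).1 ha⟩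
  · rintro ⟨a, ha0, ha⟩
    have hk : 1 ≤ finrank ℝ (LinearMap.ker (Mᵀ.mulVecLin)) := by
      have : a ∈ LinearMap.ker (Mᵀ.mulVecLin) := (mem_ker_iff M a).2 ha
      have hle : Submodule.span ℝ {a} ≤ LinearMap.ker (Mᵀ.mulVecLin) :=
        Submodule.span_le.2 (by simpa using this)
      calc 1 = finrank ℝ (Submodule.span ℝ {a}) := (finrank_span_singleton ha0).symm
        _ ≤ _ := Submodule.finrank_mono hle
    have := rank_add_ker M
    omega

lemma rank_eq_of_ker_le (M : Matrix (Fin (r+1)) (Fin c) ℝ) (a w : Fin (r+1) → ℝ) (ha0 : a ≠ 0)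
    (ha : vecMul a M = 0) (hker : ∀ x, vecMul x M = 0 → ∃ k : ℝ, x = k • w) :
    M.rank = r := by
  have h1 : M.rank ≤ r := by
    by_contra h
    have hk : LinearMap.ker (Mᵀ.mulVecLin) = ⊥ := by
      have := rank_add_ker M
      have h2 : M.rank ≤ r + 1 := by omega
      have : finrank ℝ (LinearMap.ker (Mᵀ.mulVecLin)) = 0 := by omega
      exact Submodule.finrank_eq_zero.mp this
    have : a ∈ LinearMap.ker (Mᵀ.mulVecLin) := (mem_ker_iff M a).2 ha
    rw [hk, Submodule.mem_bot] at this
    exact ha0 this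
  have h2 : finrank ℝ (LinearMap.ker (Mᵀ.mulVecLin)) ≤ 1 := by
    have hle : LinearMap.ker (Mᵀ.mulVecLin) ≤ Submodule.span ℝ {w} := by
      intro x hx
      obtain ⟨k, rfl⟩ := hker x ((mem_ker_iff M x).1 hx)
      exact Submodule.smul_mem _ _ (Submodule.mem_span_singleton_self w)
    refine (Submodule.finrank_mono hle).trans ?_
    by_cases hw : w = 0
    · subst hw
      rw [Submodule.span_zero_singleton, finrank_bot]
      omega
    · exact (finrank_span_singleton hw).le
  have := rank_add_ker M
  omega

lemma vecMulVec_mulVec (a b x : Fin (r+1) → ℝ) :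
    (vecMulVec a b) *ᵥ x = (b ⬝ᵥ x) • a := by
  funext i
  simp [Matrix.mulVec, Matrix.vecMulVec_apply, dotProduct, Finset.mul_sum, mul_assoc, mul_comm,
    mul_left_comm, Finset.sum_mul]

lemma gram_mulVec (M : Matrix (Fin (r+1)) (Fin c) ℝ) (a x : Fin (r+1) → ℝ)
    (hx : vecMul x M = 0) :
    (M * Mᵀ + vecMulVec a a) *ᵥ x = (a ⬝ᵥ x) • a := by
  rw [Matrix.add_mulVec, vecMulVec_mulVec, ← Matrix.mulVec_mulVec, Matrix.mulVec_transpose, hx]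
  simp

lemma gram_det_ne_zero_iff (M : Matrix (Fin (r+1)) (Fin c) ℝ) (a : Fin (r+1) → ℝ)
    (ha0 : a ≠ 0) (ha : vecMul a M = 0) :
    (M * Mᵀ + vecMulVec a a).det ≠ 0 ↔ M.rank = r := by
  constructor
  · intro hdet
    have hinv : IsUnit (M * Mᵀ + vecMulVec a a).det := isUnit_iff_ne_zero.2 hdet
    refine rank_eq_of_ker_le M a ((M * Mᵀ + vecMulVec a a)⁻¹ *ᵥ a) ha0 ha ?_
    intro x hx
    refine ⟨a ⬝ᵥ x, ?_⟩
    have h1 : (M * Mᵀ + vecMulVec a a)⁻¹ *ᵥ ((M * Mᵀ + vecMulVec a a) *ᵥ x) = x := by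
      rw [Matrix.mulVec_mulVec, Matrix.nonsing_inv_mul _ hinv, Matrix.one_mulVec]
    conv_lhs => rw [← h1]
    rw [gram_mulVec M a x hx, Matrix.mulVec_smul]
  · intro hrank hdet
    obtain ⟨v, hv0, hv⟩ := (Matrix.exists_mulVec_eq_zero_iff (A := ℝ)).2 hdet
    have h0 : v ⬝ᵥ ((M * Mᵀ + vecMulVec a a) *ᵥ v) = 0 := by rw [hv, dotProduct_zero]
    rw [Matrix.add_mulVec, dotProduct_add, ← Matrix.mulVec_mulVec,
      Matrix.dotProduct_mulVec, vecMulVec_mulVec, Matrix.mulVec_transpose,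
      dotProduct_smul] at h0
    have hnn1 : (0:ℝ) ≤ (v ᵥ* M) ⬝ᵥ (v ᵥ* M) :=
      Finset.sum_nonneg fun i _ => mul_self_nonneg _
    have hnn2 : (0:ℝ) ≤ (a ⬝ᵥ v) • (v ⬝ᵥ a) := by
      rw [dotProduct_comm v a, smul_eq_mul]; exact mul_self_nonneg _
    have h1 : (v ᵥ* M) ⬝ᵥ (v ᵥ* M) = 0 ∧ (a ⬝ᵥ v) • (v ⬝ᵥ a) = 0 :=
      (add_eq_zero_iff_of_nonneg hnn1 hnn2).1 h0
    have hvker : vecMul v M = 0 := dotProduct_self_eq_zero.1 h1.1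
    have hav : a ⬝ᵥ v = 0 := by
      have := h1.2
      rw [dotProduct_comm v a, smul_eq_mul, mul_self_eq_zero] at this
      exact this
    -- ker has dim 1 and contains a; v in ker and ⟂ a ⇒ v = 0
    have hfk : finrank ℝ (LinearMap.ker (Mᵀ.mulVecLin)) = 1 := by
      have := rank_add_ker M
      omega
    have hspan : Submodule.span ℝ {a} = LinearMap.ker (Mᵀ.mulVecLin) := by
      apply Submodule.eq_of_le_of_finrank_le
      · exact Submodule.span_le.2 (by simpa using (mem_ker_iff M a).2 ha)
      · rw [hfk, finrank_span_singleton ha0]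
    have hv' : v ∈ Submodule.span ℝ ({a} : Set (Fin (r+1) → ℝ)) := by
      rw [hspan]; exact (mem_ker_iff M v).2 hvker
    obtain ⟨k, rfl⟩ := Submodule.mem_span_singleton.1 hv'
    have : k * (a ⬝ᵥ a) = 0 := by
      simpa [dotProduct_smul, smul_eq_mul] using hav
    rcases mul_eq_zero.1 this with h | h
    · exact hv0 (by rw [h, zero_smul])
    · exact ha0 (dotProduct_self_eq_zero.1 h)

noncomputable def revPoly (r : ℕ) (c : Fin (r+1) → ℝ) : ℝ[X] :=
  ∑ i : Fin (r+1), Polynomial.C (c i) * Polynomial.X ^ (r - i.1)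

noncomputable def serPoly (N : ℕ) (Y : Fin N → ℝ) : ℝ[X] :=
  ∑ n : Fin N, Polynomial.C (Y n) * Polynomial.X ^ n.1

lemma revPoly_coeff (r : ℕ) (c : Fin (r+1) → ℝ) (i : Fin (r+1)) :
    (revPoly r c).coeff (r - i.1) = c i := by
  rw [revPoly, finset_sum_coeff]
  rw [Finset.sum_eq_single i]
  · simp
  · intro b _ hb
    rw [coeff_C_mul, coeff_X_pow, if_neg, mul_zero]
    intro h
    apply hb
    have hb' := b.2
    have hi' := i.2
    exact Fin.ext (by omega)
  · simp

lemma revPoly_natDegree_le (r : ℕ) (c : Fin (r+1) → ℝ) : (revPoly r c).natDegree ≤ r := by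
  refine Polynomial.natDegree_sum_le_of_forall_le _ _ fun i _ => ?_
  refine (Polynomial.natDegree_C_mul_le _ _).trans ?_
  simp [Polynomial.natDegree_X_pow]

lemma revPoly_ne_zero (r : ℕ) (c : Fin (r+1) → ℝ) (hc : c ≠ 0) : revPoly r c ≠ 0 := by
  intro h
  apply hc
  funext i
  have := revPoly_coeff r c i
  rw [h] at this
  simpa using this.symm

lemma serPoly_coeff (N : ℕ) (Y : Fin N → ℝ) (n : Fin N) :
    (serPoly N Y).coeff n.1 = Y n := by
  rw [serPoly, finset_sum_coeff]
  rw [Finset.sum_eq_single n]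
  · simp
  · intro b _ hb
    rw [coeff_C_mul, coeff_X_pow, if_neg, mul_zero]
    intro h
    exact hb (Fin.ext h.symm)
  · simp

lemma serPoly_natDegree_le (N : ℕ) (Y : Fin N → ℝ) : (serPoly N Y).natDegree ≤ N - 1 := by
  refine Polynomial.natDegree_sum_le_of_forall_le _ _ fun n _ => ?_
  refine (Polynomial.natDegree_C_mul_le _ _).trans ?_
  simp [Polynomial.natDegree_X_pow]
  omega

lemma serPoly_eq (N : ℕ) (W : ℝ[X]) (hW : W.natDegree < N) :
    serPoly N (fun n : Fin N => W.coeff n.1) = W := by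
  ext m
  by_cases hm : m < N
  · exact serPoly_coeff N _ ⟨m, hm⟩
  · rw [Polynomial.coeff_eq_zero_of_natDegree_lt, Polynomial.coeff_eq_zero_of_natDegree_lt]
    · omega
    · exact lt_of_le_of_lt (serPoly_natDegree_le N _) (by omega)

lemma vecMul_traj_eq_coeff (N r : ℕ) (hr : r < N) (c : Fin (r+1) → ℝ) (Y : Fin N → ℝ)
    (j : Fin (N + 1 - (r+1))) :
    vecMul c (traj N (r+1) Y) j = (revPoly r c * serPoly N Y).coeff (r + j.1) := by
  have hj := j.2
  rw [revPoly, serPoly, Finset.sum_mul_sum]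
  have hterm : ∀ (i : Fin (r+1)) (n : Fin N),
      Polynomial.C (c i) * Polynomial.X ^ (r - i.1) * (Polynomial.C (Y n) * Polynomial.X ^ n.1)
        = Polynomial.C (c i * Y n) * Polynomial.X ^ ((r - i.1) + n.1) := by
    intro i n
    rw [Polynomial.C_mul, pow_add]
    ring
  simp only [hterm]
  rw [finset_sum_coeff]
  have hinner : ∀ i : Fin (r+1),
      (∑ n : Fin N, Polynomial.C (c i * Y n) * Polynomial.X ^ ((r - i.1) + n.1)).coeff (r + j.1)
        = c i * Y ⟨i.1 + j.1, by have := i.2; omega⟩ := by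
    intro i
    have hi := i.2
    rw [finset_sum_coeff]
    rw [Finset.sum_eq_single (⟨i.1 + j.1, by omega⟩ : Fin N)]
    · rw [coeff_C_mul, coeff_X_pow, if_pos (by simp; omega)]
      simp
    · intro b _ hb
      rw [coeff_C_mul, coeff_X_pow, if_neg, mul_zero]
      intro h
      exact hb (Fin.ext (by simp at h ⊢; omega))
    · simp
  simp only [hinner]
  rfl

lemma polyP (N r : ℕ) (hN : 2*r < N) (A : ℝ[X]) (hA : A.Monic) (hdA : A.natDegree ≤ r) :
    ∃ Wp : ℝ[X], Wp.natDegree < N ∧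
      (∀ m, r ≤ m → m < N → (A * Wp).coeff m = 0) ∧
      (∀ C : ℝ[X], C.natDegree ≤ r → (∀ m, r ≤ m → m < N → (C * Wp).coeff m = 0) →
        ∃ k : ℝ, C = k • A) := by
  rcases Nat.eq_zero_or_pos A.natDegree with hd0 | hdpos
  · -- A = 1
    have hA1 : A = 1 := hA.natDegree_eq_zero.mp hd0
    subst hA1
    rcases Nat.eq_zero_or_pos r with hr0 | hrpos
    · subst hr0
      refine ⟨0, by simpa using hN, by simp, ?_⟩
      intro C hC _
      obtain ⟨k, hk⟩ := Polynomial.natDegree_eq_zero.mp (Nat.le_zero.mp hC)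
      exact ⟨k, by simp [← hk, Polynomial.smul_eq_C_mul]⟩
    · refine ⟨X ^ (r-1), ?_, ?_, ?_⟩
      · rw [natDegree_X_pow]; omega
      · intro m hm hmN
        rw [one_mul, coeff_X_pow, if_neg (by omega)]
      · intro C hC h
        refine ⟨C.coeff 0, ?_⟩
        ext m
        rcases Nat.eq_zero_or_pos m with rfl | hm
        · simp [Polynomial.smul_eq_C_mul]
        · have hCm : C.coeff m = 0 := by
            by_cases hmr : m ≤ r
            · have := h (m + (r-1)) (by omega) (by omega)
              rwa [coeff_mul_X_pow' C (r-1) (m + (r-1)), if_pos (by omega),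
                Nat.add_sub_cancel] at this
            · exact Polynomial.coeff_eq_zero_of_natDegree_lt (by omega)
          rw [hCm]
          simp [Polynomial.smul_eq_C_mul, coeff_C, Nat.pos_iff_ne_zero.mp hm]
  · -- natDegree A ≥ 1
    set dA := A.natDegree with hdA_def
    have hrpos : 0 < r := lt_of_lt_of_le hdpos hdA
    set S : ℝ[X] := X ^ N /ₘ A with hS
    set Rt : ℝ[X] := X ^ N %ₘ A with hRt
    have hdiv : Rt + A * S = X ^ N := Polynomial.modByMonic_add_div _ A
    have hRtdeg : Rt.natDegree < dA := by
      have h1 : Rt.degree < A.degree := Polynomial.degree_modByMonic_lt _ hA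
      by_cases h0 : Rt = 0
      · rw [h0]; simpa using hdpos
      · exact Polynomial.natDegree_lt_natDegree h0 h1
    -- choose s
    set s : ℝ[X] := if dA < r then X ^ (r - 1 - dA) else 0 with hs
    set Wp : ℝ[X] := S + s with hWp
    set P : ℝ[X] := A * s - Rt with hP
    clear_value S Rt s Wp P
    have hAW : A * Wp = X ^ N + P := by
      rw [hWp, hP, mul_add]
      have : A * S = X ^ N - Rt := by rw [← hdiv]; ring
      rw [this]; ring
    have hPdeg : P.natDegree ≤ r - 1 := by
      rw [hP]
      refine (Polynomial.natDegree_sub_le _ _).trans ?_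
      have h1 : (A * s).natDegree ≤ r - 1 := by
        by_cases hcase : dA < r
        · rw [hs, if_pos hcase, Polynomial.natDegree_mul (hA.ne_zero) (pow_ne_zero _ Polynomial.X_ne_zero)]
          rw [natDegree_X_pow]; omega
        · rw [hs, if_neg hcase, mul_zero]; simp
      omega
    have hPexact : dA < r → P.coeff (r-1) = 1 := by
      intro hcase
      have hAs_monic : (A * X ^ (r - 1 - dA)).Monic := hA.mul (monic_X_pow _)
      have hAs_deg : (A * X ^ (r - 1 - dA)).natDegree = r - 1 := by
        rw [Polynomial.natDegree_mul hA.ne_zero (pow_ne_zero _ Polynomial.X_ne_zero),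
          natDegree_X_pow]
        omega
      have h1 : (A * X ^ (r - 1 - dA)).coeff (r-1) = 1 := by
        have := hAs_monic.coeff_natDegree
        rwa [hAs_deg] at this
      have h2 : Rt.coeff (r-1) = 0 :=
        Polynomial.coeff_eq_zero_of_natDegree_lt (by omega)
      rw [hP, hs, if_pos hcase, Polynomial.coeff_sub, h1, h2, sub_zero]
    have hWpdeg : Wp.natDegree < N := by
      have hSdeg : S.natDegree = N - dA := by
        rw [hS, Polynomial.natDegree_divByMonic _ hA, natDegree_X_pow]
      have hsdeg : s.natDegree ≤ r - 1 := by
        by_cases hcase : dA < r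
        · rw [hs, if_pos hcase, natDegree_X_pow]; omega
        · rw [hs, if_neg hcase]; simp
      rw [hWp]
      refine lt_of_le_of_lt (Polynomial.natDegree_add_le _ _) (max_lt (by omega) (by omega))
    refine ⟨Wp, hWpdeg, ?_, ?_⟩
    · intro m hm hmN
      rw [hAW, Polynomial.coeff_add, coeff_X_pow, if_neg (by omega),
        Polynomial.coeff_eq_zero_of_natDegree_lt (by omega), add_zero]
    · intro C hC h
      set D : ℝ[X] := C * Wp with hD
      set Qc : ℝ[X] := D /ₘ X ^ N with hQc
      set Pc : ℝ[X] := D %ₘ X ^ N with hPc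
      have hXN : (X ^ N : ℝ[X]).Monic := monic_X_pow _
      clear_value D Qc Pc
      have hdiv2 : Pc + X ^ N * Qc = D := by
        rw [hPc, hQc]; exact Polynomial.modByMonic_add_div _ _
      have hPcN : Pc.degree < N := by
        have := Polynomial.degree_modByMonic_lt D hXN
        rw [degree_X_pow] at this
        rwa [hPc]
      have hPccoeff : ∀ m, m < N → Pc.coeff m = D.coeff m := by
        intro m hm
        have : Pc.coeff m = D.coeff m - (X ^ N * Qc).coeff m := by
          rw [← hdiv2]; simp
        rw [this, Polynomial.coeff_X_pow_mul' Qc N m, if_neg (by omega), sub_zero]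
      have hPcdeg : Pc.natDegree ≤ r - 1 := by
        rw [Polynomial.natDegree_le_iff_coeff_eq_zero]
        intro m hm
        by_cases hmN : m < N
        · rw [hPccoeff m hmN]; exact h m (by omega) hmN
        · refine Polynomial.coeff_eq_zero_of_degree_lt (lt_of_lt_of_le hPcN ?_)
          exact_mod_cast Nat.cast_le.mpr (by omega)
      -- key identity
      have hkey : X ^ N * (C - A * Qc) = A * Pc - C * P := by
        have h1 : C * (X ^ N + P) = A * (Pc + X ^ N * Qc) := by
          rw [← hAW, hdiv2, hD]; ring
        linear_combination h1
      have hCQ : C - A * Qc = 0 := by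
        by_contra hne
        have hL : (X ^ N * (C - A * Qc)).natDegree = N + (C - A * Qc).natDegree := by
          rw [Polynomial.natDegree_mul (pow_ne_zero _ Polynomial.X_ne_zero) hne, natDegree_X_pow]
        have hR : (A * Pc - C * P).natDegree ≤ 2*r - 1 := by
          refine (Polynomial.natDegree_sub_le _ _).trans ?_
          have h1 : (A * Pc).natDegree ≤ 2*r - 1 := by
            refine (Polynomial.natDegree_mul_le).trans ?_
            omega
          have h2 : (C * P).natDegree ≤ 2*r - 1 := by
            refine (Polynomial.natDegree_mul_le).trans ?_
            omega
          omega
        rw [hkey] at hL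
        omega
      have hCeq : C = A * Qc := by linear_combination hCQ
      have hPceq : Pc = Qc * P := by
        have h1 : A * Pc = C * P := by
          have := hkey
          rw [hCQ, mul_zero] at this
          linear_combination -this
        rw [hCeq] at h1
        have := mul_left_cancel₀ hA.ne_zero (by linear_combination h1 : A * Pc = A * (Qc * P))
        exact this
      by_cases hQc0 : Qc = 0
      · exact ⟨0, by rw [hCeq, hQc0, mul_zero, zero_smul]⟩
      have hQcdeg : Qc.natDegree = 0 := by
        by_cases hcase : dA < r
        · -- use Pc = Qc * P with P of exact degree r-1
          have hPne : P ≠ 0 := fun h0 => by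
            have := hPexact hcase
            rw [h0] at this
            simp at this
          have := Polynomial.natDegree_mul hQc0 hPne
          have hPdeg' : P.natDegree = r - 1 := by
            refine le_antisymm hPdeg ?_
            exact Polynomial.le_natDegree_of_ne_zero (by rw [hPexact hcase]; norm_num)
          have hPc' : Pc.natDegree ≤ r - 1 := hPcdeg
          rw [← hPceq] at this
          omega
        · -- dA = r
          have hdAr : dA = r := by omega
          have := Polynomial.natDegree_mul hA.ne_zero hQc0
          rw [← hCeq] at this
          omega
      obtain ⟨k, hk⟩ := Polynomial.natDegree_eq_zero.mp hQcdeg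
      refine ⟨k, ?_⟩
      rw [hCeq, ← hk, Polynomial.smul_eq_C_mul]
      ring

lemma existsW (N r : ℕ) (hN : 2*r < N) (a : Fin (r+1) → ℝ) (ha : a ≠ 0) :
    ∃ W : Fin N → ℝ, vecMul a (traj N (r+1) W) = 0 ∧ (traj N (r+1) W).rank = r := by
  have hr : r < N := by omega
  set Ah : ℝ[X] := revPoly r a with hAh
  have hA0 : Ah ≠ 0 := revPoly_ne_zero r a ha
  set lc : ℝ := Ah.leadingCoeff with hlc
  have hlc0 : lc ≠ 0 := leadingCoeff_ne_zero.mpr hA0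
  set Amon : ℝ[X] := Ah * Polynomial.C lc⁻¹ with hAmon
  have hmon : Amon.Monic := monic_mul_leadingCoeff_inv hA0
  have hdeg : Amon.natDegree ≤ r := by
    rw [hAmon, Polynomial.natDegree_mul_C (inv_ne_zero hlc0)]
    exact revPoly_natDegree_le r a
  obtain ⟨Wp, hWdeg, hWzero, hWker⟩ := polyP N r hN Amon hmon hdeg
  set W : Fin N → ℝ := fun n => Wp.coeff n.1 with hW
  have hser : serPoly N W = Wp := serPoly_eq N Wp hWdeg
  have hcoeffzero : ∀ (c : Fin (r+1) → ℝ),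
      (∀ m, r ≤ m → m < N → (revPoly r c * Wp).coeff m = 0) →
      vecMul c (traj N (r+1) W) = 0 := by
    intro c hc
    funext j
    have hj := j.2
    rw [vecMul_traj_eq_coeff N r hr c W j, hser, hc (r + j.1) (by omega) (by omega)]
    rfl
  refine ⟨W, ?_, ?_⟩
  · apply hcoeffzero
    intro m hm hmN
    have h1 : revPoly r a * Wp = Polynomial.C lc * (Amon * Wp) := by
      rw [hAmon]
      rw [mul_comm Ah (Polynomial.C lc⁻¹), mul_assoc, ← mul_assoc (Polynomial.C lc),
        ← Polynomial.C_mul, mul_inv_cancel₀ hlc0, Polynomial.C_1, one_mul]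
    rw [h1, Polynomial.coeff_C_mul, hWzero m hm hmN, mul_zero]
  · refine rank_eq_of_ker_le _ a a ha ?_ ?_
    · apply hcoeffzero
      intro m hm hmN
      have h1 : revPoly r a * Wp = Polynomial.C lc * (Amon * Wp) := by
        rw [hAmon, mul_comm Ah (Polynomial.C lc⁻¹), mul_assoc, ← mul_assoc (Polynomial.C lc),
          ← Polynomial.C_mul, mul_inv_cancel₀ hlc0, Polynomial.C_1, one_mul]
      rw [h1, Polynomial.coeff_C_mul, hWzero m hm hmN, mul_zero]
    · intro x hx
      have hx' : ∀ m, r ≤ m → m < N → (revPoly r x * Wp).coeff m = 0 := by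
        intro m hm hmN
        have hjlt : m - r < N + 1 - (r+1) := by omega
        have := vecMul_traj_eq_coeff N r hr x W ⟨m - r, hjlt⟩
        rw [hser] at this
        have h2 : r + (m - r) = m := by omega
        rw [h2] at this
        rw [← this, hx]
        rfl
      obtain ⟨k, hk⟩ := hWker (revPoly r x) (revPoly_natDegree_le r x) hx'
      refine ⟨k * lc⁻¹, ?_⟩
      funext i
      have h3 : x i = (revPoly r x).coeff (r - i.1) := (revPoly_coeff r x i).symm
      rw [h3, hk, hAmon, Polynomial.smul_eq_C_mul, ← mul_assoc, Polynomial.coeff_mul_C,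
        Polynomial.coeff_C_mul, revPoly_coeff r a i]
      simp [mul_comm, mul_assoc, mul_left_comm]

lemma isClosed_glrr (N r : ℕ) :
    IsClosed {Y : Fin N → ℝ | ∃ a : Fin (r+1) → ℝ, a ≠ 0 ∧ vecMul a (traj N (r+1) Y) = 0} := by
  apply IsSeqClosed.isClosed
  intro Ys Y hYs hlim
  choose av hav0 hav using hYs
  set b : ℕ → (Fin (r+1) → ℝ) := fun k => (‖av k‖)⁻¹ • av k with hb
  have hbnorm : ∀ k, ‖b k‖ = 1 := fun k => norm_smul_inv_norm (hav0 k)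
  have hbker : ∀ k, vecMul (b k) (traj N (r+1) (Ys k)) = 0 := by
    intro k
    rw [hb]
    rw [Matrix.smul_vecMul, hav k, smul_zero]
  have hbmem : ∀ k, b k ∈ Metric.sphere (0 : Fin (r+1) → ℝ) 1 := by
    intro k
    rw [mem_sphere_zero_iff_norm]
    exact hbnorm k
  obtain ⟨aL, haLmem, φ, hφ, hconv⟩ :=
    (isCompact_sphere (0 : Fin (r+1) → ℝ) 1).tendsto_subseq hbmem
  have haL0 : aL ≠ 0 := by
    rw [mem_sphere_zero_iff_norm] at haLmem
    intro h
    rw [h, norm_zero] at haLmem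
    norm_num at haLmem
  refine ⟨aL, haL0, ?_⟩
  funext j
  set g : (Fin (r+1) → ℝ) × (Fin N → ℝ) → ℝ :=
    fun p => ∑ i : Fin (r+1), p.1 i * p.2 ⟨i.1 + j.1, by have := i.2; have := j.2; omega⟩ with hg
  have hgcont : Continuous g := by
    apply continuous_finset_sum
    intro i _
    exact ((continuous_apply i).comp continuous_fst).mul
      ((continuous_apply _).comp continuous_snd)
  have hgz : ∀ k, g (b (φ k), Ys (φ k)) = 0 := by
    intro k
    have := congrFun (hbker (φ k)) j
    simpa [hg, Matrix.vecMul, dotProduct, traj] using this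
  have htend : Filter.Tendsto (fun k => g (b (φ k), Ys (φ k))) Filter.atTop (nhds (g (aL, Y))) := by
    apply hgcont.continuousAt.tendsto.comp
    rw [nhds_prod_eq]
    exact Filter.Tendsto.prodMk hconv (hlim.comp hφ.tendsto_atTop)
  have : g (aL, Y) = 0 := by
    have h2 : Filter.Tendsto (fun k => g (b (φ k), Ys (φ k))) Filter.atTop (nhds 0) := by
      simp only [hgz]
      exact tendsto_const_nhds
    exact tendsto_nhds_unique htend h2
  simpa [hg, Matrix.vecMul, dotProduct, traj] using this

lemma vecMul_smul_mat {m n : ℕ} (x : Fin m → ℝ) (t : ℝ) (A : Matrix (Fin m) (Fin n) ℝ) :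
    x ᵥ* (t • A) = t • (x ᵥ* A) := by
  funext j
  simp only [Matrix.vecMul, dotProduct, Matrix.smul_apply, smul_eq_mul, Pi.smul_apply,
    Finset.mul_sum]
  exact Finset.sum_congr rfl fun i _ => by ring

lemma mem_closure_rank_eq (N r : ℕ) (hN : 2*r < N) (Y : Fin N → ℝ)
    (hY : (traj N (r+1) Y).rank ≤ r) :
    Y ∈ closure {Z : Fin N → ℝ | (traj N (r+1) Z).rank = r} := by
  obtain ⟨a, ha0, haY⟩ := (rank_le_iff_exists _).1 hY
  obtain ⟨W, haW, hWrank⟩ := existsW N r hN a ha0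
  set D : Fin N → ℝ := fun n => W n - Y n with hD
  set Z : ℝ → (Fin N → ℝ) := fun t => fun n => Y n + t * D n with hZ
  have hZ1 : Z 1 = W := by funext n; simp [hZ, hD]
  have hZ0 : Z 0 = Y := by funext n; simp [hZ]
  have htrajZ : ∀ t, traj N (r+1) (Z t) =
      Matrix.of fun i j => traj N (r+1) Y i j + t * traj N (r+1) D i j := by
    intro t; rfl
  have htr : ∀ t, traj N (r+1) (Z t)
      = traj N (r+1) Y + t • (traj N (r+1) W - traj N (r+1) Y) := by
    intro t
    ext i j
    simp only [traj, Matrix.of_apply, Matrix.add_apply, Matrix.smul_apply, Matrix.sub_apply,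
      smul_eq_mul, hZ, hD]
  have hZker : ∀ t, vecMul a (traj N (r+1) (Z t)) = 0 := by
    intro t
    rw [htr t, Matrix.vecMul_add, haY, vecMul_smul_mat, Matrix.vecMul_sub, haY, haW]
    simp
  -- polynomial witness
  set MX : Matrix (Fin (r+1)) (Fin (N+1-(r+1))) ℝ[X] :=
    Matrix.of fun i j => Polynomial.C (traj N (r+1) Y i j)
      + Polynomial.X * Polynomial.C (traj N (r+1) D i j) with hMX
  set aX : Fin (r+1) → ℝ[X] := fun i => Polynomial.C (a i) with haX
  set p : ℝ[X] := (MX * MXᵀ + vecMulVec aX aX).det with hp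
  have heval : ∀ t : ℝ, p.eval t =
      (traj N (r+1) (Z t) * (traj N (r+1) (Z t))ᵀ + vecMulVec a a).det := by
    intro t
    have hdet := RingHom.map_det (Polynomial.evalRingHom t) (MX * MXᵀ + vecMulVec aX aX)
    simp only [RingHom.mapMatrix_apply] at hdet
    rw [hp, show Polynomial.eval t (MX * MXᵀ + vecMulVec aX aX).det
      = (Polynomial.evalRingHom t) (MX * MXᵀ + vecMulVec aX aX).det from rfl, hdet]
    congr 1
    rw [Matrix.map_add _ (fun a b => map_add (Polynomial.evalRingHom t) a b), Matrix.map_mul]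
    congr 1
    · congr 1
      · funext i j
        simp [hMX, htrajZ t, Matrix.map_apply, Polynomial.coe_evalRingHom]
        ring
      · rw [Matrix.transpose_map]
        congr 1
        funext i j
        simp [hMX, htrajZ t, Matrix.map_apply, Polynomial.coe_evalRingHom]
        ring
    · funext i j
      simp [Matrix.map_apply, Matrix.vecMulVec_apply, haX, Polynomial.coe_evalRingHom]
  have hp1 : p.eval 1 ≠ 0 := by
    rw [heval 1, hZ1]
    exact (gram_det_ne_zero_iff _ a ha0 haW).2 hWrank
  have hpne : p ≠ 0 := fun h => hp1 (by rw [h]; simp)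
  have hroots := Polynomial.finite_setOf_isRoot hpne
  have hpick : ∀ k : ℕ, ∃ t : ℝ, (t ∈ Set.Ioo (0:ℝ) (1/(k+1)) ∧ ¬ p.IsRoot t) := by
    intro k
    have hIoo : (Set.Ioo (0:ℝ) (1/(k+1))).Infinite :=
      Set.infinite_coe_iff.mp (Set.Ioo.infinite (by positivity))
    obtain ⟨t, ht⟩ := (hIoo.diff hroots).nonempty
    exact ⟨t, ht.1, ht.2⟩
  choose ts hts hroot using hpick
  have htt : Tendsto ts atTop (nhds 0) := by
    apply squeeze_zero (fun k => (hts k).1.le) (fun k => (hts k).2.le)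
    exact tendsto_one_div_add_atTop_nhds_zero_nat
  have hZcont : Continuous Z := by
    apply continuous_pi
    intro n
    simp only [hZ]
    exact continuous_const.add (continuous_id.mul continuous_const)
  have htendZ : Tendsto (fun k => Z (ts k)) atTop (nhds Y) := by
    rw [← hZ0]
    exact (hZcont.tendsto 0).comp htt
  refine mem_closure_of_tendsto htendZ ?_
  filter_upwards with k
  show (traj N (r+1) (Z (ts k))).rank = r
  refine (gram_det_ne_zero_iff _ a ha0 (hZker (ts k))).1 ?_
  rw [← heval (ts k)]
  exact hroot k

end Helpers

/-- for `2r < N`, the closure of `D_r = {Y : rank T_{r+1}(Y) = r}`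
equals `{Y : rank T_{r+1}(Y) ≤ r}`, which equals the set of series governed by
some GLRR of order `r` (i.e. `aᵀ T_{r+1}(Y) = 0` for some nonzero `a ∈ ℝ^{r+1}`). -/
theorem stmt1 (N r : ℕ) (hr : 2 * r < N) :
    closure {Y : Fin N → ℝ | (traj N (r + 1) Y).rank = r}
        = {Y : Fin N → ℝ | (traj N (r + 1) Y).rank ≤ r} ∧
      {Y : Fin N → ℝ | (traj N (r + 1) Y).rank ≤ r}
        = {Y : Fin N → ℝ | ∃ a : Fin (r + 1) → ℝ, a ≠ 0 ∧
            Matrix.vecMul a (traj N (r + 1) Y) = 0} := by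
  have hsec : {Y : Fin N → ℝ | (traj N (r + 1) Y).rank ≤ r}
      = {Y : Fin N → ℝ | ∃ a : Fin (r + 1) → ℝ, a ≠ 0 ∧
          Matrix.vecMul a (traj N (r + 1) Y) = 0} :=
    Set.ext fun Y => rank_le_iff_exists _
  refine ⟨Set.Subset.antisymm ?_ ?_, hsec⟩
  · apply closure_minimal
    · intro Y hY
      exact le_of_eq hY
    · rw [hsec]
      exact isClosed_glrr N r
  · intro Y hY
    exact mem_closure_rank_eq N r hr Y hY
end

section
/- Let N and r be integers with 2r < N and let Y ∈ ℝ^N. Then rank T_{r+1}(Y) = r if and only if there exists a nonzero vector a ∈ ℝ^{r+1} with a^T T_{r+1}(Y) = 0^T, and moreover for every m < r there is no nonzero vector b ∈ ℝ^{m+1} with b^T T_{m+1}(Y) = 0^T (i.e., Y is governed by a GLRR of order r and this GLRR is minimal). -/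
open Matrix

open Submodule Module


/-- Hankel matrix of a ℕ-indexed series. -/
def hank (y : ℕ → ℝ) (L K : ℕ) : Matrix (Fin L) (Fin K) ℝ :=
  Matrix.of fun i j => y (i.1 + j.1)

lemma rank_lt_of_vecMul_eq_zero {L K : ℕ} (A : Matrix (Fin L) (Fin K) ℝ)
    {a : Fin L → ℝ} (ha : a ≠ 0) (h : Matrix.vecMul a A = 0) : A.rank < L := by
  have hrn := LinearMap.finrank_range_add_finrank_ker (Aᵀ.mulVecLin)
  have hker : a ∈ LinearMap.ker Aᵀ.mulVecLin := by
    simp only [LinearMap.mem_ker, Matrix.mulVecLin_apply, Matrix.mulVec_transpose]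
    exact h
  have h1 : 1 ≤ finrank ℝ (LinearMap.ker Aᵀ.mulVecLin) := by
    rw [Submodule.one_le_finrank_iff]
    exact fun hb => ha (by rw [hb, Submodule.mem_bot] at hker; exact hker)
  have hfr : finrank ℝ (Fin L → ℝ) = L := by simp
  have : Aᵀ.rank = A.rank := Matrix.rank_transpose A
  rw [Matrix.rank] at this
  omega

lemma exists_vecMul_eq_zero {L K : ℕ} (A : Matrix (Fin L) (Fin K) ℝ)
    (h : A.rank < L) : ∃ a : Fin L → ℝ, a ≠ 0 ∧ Matrix.vecMul a A = 0 := by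
  have hrn := LinearMap.finrank_range_add_finrank_ker (Aᵀ.mulVecLin)
  have hfr : finrank ℝ (Fin L → ℝ) = L := by simp
  have hT : Aᵀ.rank = A.rank := Matrix.rank_transpose A
  rw [Matrix.rank] at hT
  have hk : LinearMap.ker Aᵀ.mulVecLin ≠ ⊥ := by
    intro hb
    rw [hb] at hrn
    simp only [finrank_bot, add_zero] at hrn
    omega
  obtain ⟨a, hmem, hne⟩ := Submodule.exists_mem_ne_zero_of_ne_bot hk
  refine ⟨a, hne, ?_⟩
  simpa only [LinearMap.mem_ker, Matrix.mulVecLin_apply, Matrix.mulVec_transpose] using hmem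

lemma rank_add_two_le {L K : ℕ} (A : Matrix (Fin L) (Fin K) ℝ)
    {a b : Fin L → ℝ} (hab : LinearIndependent ℝ ![a, b])
    (h1 : Matrix.vecMul a A = 0) (h2 : Matrix.vecMul b A = 0) : A.rank + 2 ≤ L := by
  have hrn := LinearMap.finrank_range_add_finrank_ker (Aᵀ.mulVecLin)
  have hfr : finrank ℝ (Fin L → ℝ) = L := by simp
  have hT : Aᵀ.rank = A.rank := Matrix.rank_transpose A
  rw [Matrix.rank] at hT
  have hsp : Submodule.span ℝ (Set.range ![a, b]) ≤ LinearMap.ker Aᵀ.mulVecLin := by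
    rw [Submodule.span_le]
    rintro x ⟨i, rfl⟩
    fin_cases i <;>
      simp only [LinearMap.mem_ker, SetLike.mem_coe, Matrix.mulVecLin_apply,
        Matrix.mulVec_transpose, Matrix.cons_val_zero, Matrix.cons_val_one, Matrix.head_cons] <;>
      assumption
  have h2' : 2 ≤ finrank ℝ (LinearMap.ker Aᵀ.mulVecLin) := by
    have := finrank_span_eq_card hab
    have hle := Submodule.finrank_mono hsp
    rw [this] at hle
    simpa using hle
  omega

/-- `Y` satisfies a GLRR of order `m` valid on `K` windows. -/
def Glrr (y : ℕ → ℝ) (m K : ℕ) : Prop :=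
  ∃ b : Fin (m + 1) → ℝ, b ≠ 0 ∧ Matrix.vecMul b (hank y (m + 1) K) = 0

lemma vecMul_hank_apply {y : ℕ → ℝ} {L K : ℕ} (b : Fin L → ℝ) (j : Fin K) :
    Matrix.vecMul b (hank y L K) j = ∑ i : Fin L, b i * y (i.1 + j.1) := by
  simp [Matrix.vecMul, hank, dotProduct]

lemma Glrr.mono {y : ℕ → ℝ} {m K K' : ℕ} (hK : K' ≤ K) (h : Glrr y m K) : Glrr y m K' := by
  obtain ⟨b, hb, hker⟩ := h
  refine ⟨b, hb, ?_⟩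
  funext j
  have := congrFun hker ⟨j.1, by omega⟩
  rw [vecMul_hank_apply] at this
  rw [vecMul_hank_apply]
  simpa using this

lemma Glrr.pad {y : ℕ → ℝ} {m K : ℕ} (h : Glrr y m K) : Glrr y (m + 1) K := by
  obtain ⟨b, hb, hker⟩ := h
  refine ⟨Fin.snoc b 0, ?_, ?_⟩
  · intro h0
    apply hb
    funext i
    have := congrFun h0 i.castSucc
    simpa using this
  · funext j
    rw [vecMul_hank_apply, Fin.sum_univ_castSucc]
    simp only [Fin.snoc_castSucc, Fin.snoc_last, zero_mul, add_zero]
    have := congrFun hker j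
    rw [vecMul_hank_apply] at this
    simpa using this

lemma Glrr.up {y : ℕ → ℝ} {N m m' : ℕ} (hm : m ≤ m') (h : Glrr y m (N - m)) :
    Glrr y m' (N - m') := by
  induction m' , hm using Nat.le_induction with
  | base => exact h
  | succ k hk ih => exact (ih.pad).mono (by omega)

lemma pair_indep {s : ℕ} {b : Fin (s + 1) → ℝ} (hb : b ≠ 0) :
    LinearIndependent ℝ ![(Fin.snoc b (0 : ℝ) : Fin (s+2) → ℝ), (Fin.cons (0 : ℝ) b : Fin (s+2) → ℝ)] := by
  classical
  rw [linearIndependent_fin2]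
  constructor
  · simp only [Matrix.cons_val_one, Matrix.head_cons]
    intro h0
    apply hb
    funext i
    have := congrFun h0 i.succ
    simpa using this
  · intro a ha
    simp only [Matrix.cons_val_one, Matrix.head_cons, Matrix.cons_val_zero] at ha
    have hex : ∃ n, ∃ h : n < s + 1, b ⟨n, h⟩ ≠ 0 := by
      obtain ⟨i, hi⟩ := Function.ne_iff.mp hb
      exact ⟨i.1, i.2, by simpa using hi⟩
    have hminex : ∃ n0, (∃ h : n0 < s + 1, b ⟨n0, h⟩ ≠ 0) ∧
        ∀ k, k < n0 → ∀ h : k < s + 1, b ⟨k, h⟩ = 0 := by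
      refine ⟨Nat.find hex, Nat.find_spec hex, ?_⟩
      intro k hk h
      by_contra hne
      have := Nat.find_le (h := hex) ⟨h, hne⟩
      omega
    obtain ⟨n0, ⟨hn0lt, hn0⟩, hmin⟩ := hminex
    have heval := congrFun ha ⟨n0, by omega⟩
    have hR : (Fin.snoc b (0 : ℝ) : Fin (s+2) → ℝ) (⟨n0, by omega⟩ : Fin (s + 2)) = b ⟨n0, hn0lt⟩ := by
      have h' : (⟨n0, by omega⟩ : Fin (s + 2)) = Fin.castSucc ⟨n0, hn0lt⟩ := rfl
      rw [h', Fin.snoc_castSucc]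
    rw [hR, Pi.smul_apply] at heval
    rcases n0 with _ | k
    · rw [show (⟨(0:ℕ), by omega⟩ : Fin (s+2)) = 0 from rfl] at heval
      simp only [Fin.cons_zero, smul_zero] at heval
      exact hn0 heval.symm
    · have hk1 : (⟨k + 1, by omega⟩ : Fin (s + 2)) = Fin.succ ⟨k, by omega⟩ := rfl
      rw [hk1, Fin.cons_succ] at heval
      rw [hmin k (by omega) (by omega)] at heval
      simp only [smul_zero] at heval
      exact hn0 heval.symm

def vcol (y : ℕ → ℝ) (L j : ℕ) : Fin L → ℝ := fun i => y (i.1 + j)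

lemma hank_cols (y : ℕ → ℝ) (L K : ℕ) :
    Set.range (hank y L K)ᵀ = vcol y L '' Set.Iio K := by
  ext x
  constructor
  · rintro ⟨j, rfl⟩
    exact ⟨j.1, j.2, rfl⟩
  · rintro ⟨j, hj, rfl⟩
    exact ⟨⟨j, hj⟩, rfl⟩

lemma hank_rank (y : ℕ → ℝ) (L K : ℕ) :
    (hank y L K).rank = finrank ℝ (span ℝ (vcol y L '' Set.Iio K)) := by
  rw [Matrix.rank_eq_finrank_span_cols, ← hank_cols]; rfl

lemma pi_vcol (y : ℕ → ℝ) (r j : ℕ) :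
    LinearMap.funLeft ℝ ℝ (Fin.castSucc (n := r)) (vcol y (r + 1) j) = vcol y r j := by
  funext i
  simp [LinearMap.funLeft_apply, vcol]

lemma sigma_vcol (y : ℕ → ℝ) (r j : ℕ) :
    LinearMap.funLeft ℝ ℝ (Fin.succ (n := r)) (vcol y (r + 1) j) = vcol y r (j + 1) := by
  funext i
  simp only [LinearMap.funLeft_apply, vcol]
  congr 1
  simp [Fin.val_succ]
  omega

lemma map_pi_span (y : ℕ → ℝ) (r K : ℕ) :
    Submodule.map (LinearMap.funLeft ℝ ℝ (Fin.castSucc (n := r)))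
      (span ℝ (vcol y (r + 1) '' Set.Iio K)) = span ℝ (vcol y r '' Set.Iio K) := by
  rw [Submodule.map_span, Set.image_image]
  simp only [pi_vcol]

lemma map_sigma_span (y : ℕ → ℝ) (r K : ℕ) :
    Submodule.map (LinearMap.funLeft ℝ ℝ (Fin.succ (n := r)))
      (span ℝ (vcol y (r + 1) '' Set.Iio K)) =
      span ℝ ((fun j => vcol y r (j + 1)) '' Set.Iio K) := by
  rw [Submodule.map_span, Set.image_image]
  simp only [sigma_vcol]

lemma exists_shift_map (y : ℕ → ℝ) (r K : ℕ)
    (hker : LinearMap.ker ((LinearMap.funLeft ℝ ℝ (Fin.castSucc (n := r))).comp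
      (span ℝ (vcol y (r + 1) '' Set.Iio K)).subtype) = ⊥) :
    ∃ Φ : (Fin r → ℝ) →ₗ[ℝ] (Fin r → ℝ),
      ∀ j, j < K → Φ (vcol y r j) = vcol y r (j + 1) := by
  classical
  set C' := span ℝ (vcol y (r + 1) '' Set.Iio K) with hC'def
  set π := LinearMap.funLeft ℝ ℝ (Fin.castSucc (n := r)) with hπdef
  set σl := LinearMap.funLeft ℝ ℝ (Fin.succ (n := r)) with hσdef
  set f := π.comp C'.subtype with hfdef
  have hinj : Function.Injective f := LinearMap.ker_eq_bot.mp hker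
  have hrange : LinearMap.range f = span ℝ (vcol y r '' Set.Iio K) := by
    rw [hfdef, LinearMap.range_comp, Submodule.range_subtype, hπdef, map_pi_span]
  set V₁ := span ℝ (vcol y r '' Set.Iio K) with hV₁def
  obtain ⟨q, hq⟩ := Submodule.exists_isCompl V₁
  set e := LinearEquiv.ofInjective f hinj with hedef
  have hEq : V₁ = LinearMap.range f := hrange.symm
  set φ : V₁ →ₗ[ℝ] (Fin r → ℝ) :=
    (σl.comp C'.subtype).comp
      ((e.symm.toLinearMap).comp (LinearEquiv.ofEq V₁ (LinearMap.range f) hEq).toLinearMap)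
    with hφdef
  refine ⟨φ.comp (V₁.linearProjOfIsCompl q hq), ?_⟩
  intro j hj
  have hvmem : vcol y r j ∈ V₁ := subset_span ⟨j, hj, rfl⟩
  have hcmem : vcol y (r + 1) j ∈ C' := subset_span ⟨j, hj, rfl⟩
  have hproj : (V₁.linearProjOfIsCompl q hq) (vcol y r j) = ⟨vcol y r j, hvmem⟩ :=
    Submodule.linearProjOfIsCompl_apply_left hq ⟨vcol y r j, hvmem⟩
  simp only [LinearMap.comp_apply, hproj]
  have hz : e.symm ((LinearEquiv.ofEq V₁ (LinearMap.range f) hEq) ⟨vcol y r j, hvmem⟩)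
      = ⟨vcol y (r + 1) j, hcmem⟩ := by
    rw [LinearEquiv.symm_apply_eq]
    apply Subtype.ext
    rw [LinearEquiv.coe_ofEq_apply, hedef, LinearEquiv.ofInjective_apply]
    show vcol y r j = f ⟨vcol y (r + 1) j, hcmem⟩
    rw [hfdef]
    simp only [LinearMap.comp_apply, Submodule.coe_subtype, hπdef]
    exact (pi_vcol y r j).symm
  rw [hφdef]
  simp only [LinearMap.comp_apply, LinearEquiv.coe_coe]
  rw [hz]
  show σl (vcol y (r + 1) j) = vcol y r (j + 1)
  rw [hσdef]
  exact sigma_vcol y r j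
lemma hankel_step (y : ℕ → ℝ) (r K : ℕ) (hK : r + 1 ≤ K)
    (hfull : (hank y r (K + 1)).rank = r) (hlow : (hank y (r + 1) K).rank < r) : False := by
  classical
  have hr1 : 1 ≤ r := lt_of_le_of_lt (Nat.zero_le _) hlow
  have hveq : ∀ a b : ℕ, a = b → vcol y r a = vcol y r b := fun a b h => by rw [h]
  set π := LinearMap.funLeft ℝ ℝ (Fin.castSucc (n := r)) with hπdef
  set C' := span ℝ (vcol y (r + 1) '' Set.Iio K) with hC'def
  set V₁ := span ℝ (vcol y r '' Set.Iio K) with hV₁def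
  set V₂ := span ℝ ((fun j => vcol y r (j + 1)) '' Set.Iio K) with hV₂def
  set Vf := span ℝ (vcol y r '' Set.Iio (K + 1)) with hVfdef
  have hVf : finrank ℝ Vf = r := by rw [hVfdef, ← hank_rank]; exact hfull
  have hC : finrank ℝ C' < r := by rw [hC'def, ← hank_rank]; exact hlow
  have hV₁C : finrank ℝ V₁ ≤ finrank ℝ C' := by
    have h1 : V₁ = Submodule.map π C' := by rw [hV₁def, hC'def, hπdef, map_pi_span]
    rw [h1]
    exact Submodule.finrank_map_le _ _
  have hV₂C : finrank ℝ V₂ ≤ finrank ℝ C' := by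
    have h1 : V₂ = Submodule.map (LinearMap.funLeft ℝ ℝ (Fin.succ (n := r))) C' := by
      rw [hV₂def, hC'def, map_sigma_span]
    rw [h1]
    exact Submodule.finrank_map_le _ _
  have hsing : ∀ x : Fin r → ℝ, finrank ℝ (ℝ ∙ x) ≤ 1 := by
    intro x
    by_cases hx : x = 0
    · subst hx
      rw [Submodule.span_zero_singleton]
      simp
    · rw [finrank_span_singleton hx]
  have hfinal : ∀ (A : Submodule ℝ (Fin r → ℝ)) (z : Fin r → ℝ),
      Vf ≤ A ⊔ (ℝ ∙ z) → finrank ℝ A + 2 ≤ r → False := by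
    intro A z hle hA
    have h1 := Submodule.finrank_mono hle
    have h2 := Submodule.finrank_add_le_finrank_add_finrank A (ℝ ∙ z)
    have h3 := hsing z
    omega
  by_cases h12 : V₁ ≤ V₂
  · have hle : Vf ≤ V₂ := by
      rw [hVfdef, Submodule.span_le]
      rintro x ⟨j, hj, rfl⟩
      simp only [Set.mem_Iio] at hj
      rcases Nat.eq_zero_or_pos j with h0 | hpos
      · subst h0
        exact h12 (subset_span ⟨0, by simp; omega, rfl⟩)
      · exact subset_span ⟨j - 1, by simp; omega, hveq (j - 1 + 1) j (by omega)⟩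
    have := Submodule.finrank_mono hle
    omega
  by_cases h21 : V₂ ≤ V₁
  · have hle : Vf ≤ V₁ := by
      rw [hVfdef, Submodule.span_le]
      rintro x ⟨j, hj, rfl⟩
      simp only [Set.mem_Iio] at hj
      rcases Nat.lt_or_ge j K with hjK | hjK
      · exact subset_span ⟨j, hjK, rfl⟩
      · exact h21 (subset_span ⟨j - 1, by simp; omega, hveq (j - 1 + 1) j (by omega)⟩)
    have := Submodule.finrank_mono hle
    omega
  set f := π.comp C'.subtype with hfdef
  have hrangef : LinearMap.range f = V₁ := by
    rw [hfdef, LinearMap.range_comp, Submodule.range_subtype, hπdef, hC'def, map_pi_span, hV₁def]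
  have hrn := LinearMap.finrank_range_add_finrank_ker f
  rw [hrangef] at hrn
  by_cases hker : LinearMap.ker f = ⊥
  · obtain ⟨Φ, hΦ⟩ := exists_shift_map y r K (by rw [← hπdef, ← hC'def, ← hfdef]; exact hker)
    have hD2 : finrank ℝ ↥(V₁ ⊓ V₂) + 2 ≤ r := by
      have hlt : V₁ ⊓ V₂ < V₁ := lt_of_le_of_ne inf_le_left (fun h => h12 (inf_eq_left.mp h))
      have := Submodule.finrank_lt_finrank_of_lt hlt
      omega
    have hWD : ∀ t, t ≤ r → span ℝ (vcol y r '' Set.Ico 1 t) ≤ V₁ ⊓ V₂ := by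
      intro t ht
      rw [Submodule.span_le]
      rintro x ⟨i, hi, rfl⟩
      simp only [Set.mem_Ico] at hi
      refine Submodule.mem_inf.mpr ⟨subset_span ⟨i, by simp; omega, rfl⟩,
        subset_span ⟨i - 1, by simp; omega, hveq (i - 1 + 1) i (by omega)⟩⟩
    have ht : ∃ t, 1 ≤ t ∧ t < r ∧ vcol y r t ∈ span ℝ (vcol y r '' Set.Ico 1 t) := by
      by_contra hno
      push_neg at hno
      have grow : ∀ t, 1 ≤ t → t ≤ r → t - 1 ≤ finrank ℝ (span ℝ (vcol y r '' Set.Ico 1 t)) := by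
        intro t
        induction t with
        | zero => exact fun h => absurd h (by omega)
        | succ n ih =>
          intro h1 h2
          rcases Nat.eq_zero_or_pos n with hn0 | hn1
          · subst hn0
            simp
          · have hlt' : span ℝ (vcol y r '' Set.Ico 1 n) < span ℝ (vcol y r '' Set.Ico 1 (n + 1)) := by
              have hsub : Set.Ico 1 n ⊆ Set.Ico 1 (n + 1) := by
                intro a ha
                simp only [Set.mem_Ico] at ha ⊢
                omega
              refine lt_of_le_of_ne (Submodule.span_mono (Set.image_mono hsub)) ?_
              intro heq
              apply hno n hn1 (by omega)
              rw [heq]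
              exact subset_span ⟨n, by simp; omega, rfl⟩
            have hlt'' := Submodule.finrank_lt_finrank_of_lt hlt'
            have ihn := ih hn1 (by omega)
            omega
      have hg1 := grow r (by omega) le_rfl
      have hg2 := Submodule.finrank_mono (hWD r le_rfl)
      omega
    obtain ⟨t, ht1, htr, htW⟩ := ht
    have hmapW : ∀ j, t ≤ j → j ≤ K → vcol y r j ∈ span ℝ (vcol y r '' Set.Ico 1 t) := by
      intro j
      induction j with
      | zero => intro h _; exact absurd h (by omega)
      | succ n ih =>
        intro h1 h2
        rcases eq_or_lt_of_le h1 with heq | hlt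
        · rw [← heq] at *
          exact htW
        · have hvn := ih (by omega) (by omega)
          rw [← hΦ n (by omega)]
          have hmem := Submodule.mem_map_of_mem (f := Φ) hvn
          have hmaple : Submodule.map Φ (span ℝ (vcol y r '' Set.Ico 1 t)) ≤
              span ℝ (vcol y r '' Set.Ico 1 t) := by
            rw [Submodule.map_span, Set.image_image, Submodule.span_le]
            rintro x ⟨i, hi, rfl⟩
            simp only [Set.mem_Ico] at hi
            show Φ (vcol y r i) ∈ (span ℝ (vcol y r '' Set.Ico 1 t) : Set (Fin r → ℝ))
            rw [hΦ i (by omega)]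
            rcases Nat.lt_or_ge (i + 1) t with hit | hit
            · exact subset_span ⟨i + 1, by simp; omega, rfl⟩
            · have hieq : i + 1 = t := by omega
              rw [hieq]
              exact htW
          exact hmaple hmem
    apply hfinal (span ℝ (vcol y r '' Set.Ico 1 t)) (vcol y r 0)
    · rw [hVfdef, Submodule.span_le]
      rintro x ⟨j, hj, rfl⟩
      simp only [Set.mem_Iio] at hj
      rcases Nat.eq_zero_or_pos j with h0 | hpos
      · subst h0
        exact Submodule.mem_sup_right (Submodule.mem_span_singleton_self _)
      · rcases Nat.lt_or_ge j t with hjt | hjt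
        · exact Submodule.mem_sup_left (subset_span ⟨j, by simp; omega, rfl⟩)
        · exact Submodule.mem_sup_left (hmapW j hjt (by omega))
    · have := Submodule.finrank_mono (hWD t (by omega))
      omega
  · have hkpos : 1 ≤ finrank ℝ (LinearMap.ker f) := by
      rw [Submodule.one_le_finrank_iff]
      exact hker
    apply hfinal V₁ (vcol y r K)
    · rw [hVfdef, Submodule.span_le]
      rintro x ⟨j, hj, rfl⟩
      simp only [Set.mem_Iio] at hj
      rcases Nat.lt_or_ge j K with hjK | hjK
      · exact Submodule.mem_sup_left (subset_span ⟨j, hjK, rfl⟩)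
      · have hjeq : j = K := by omega
        subst hjeq
        exact Submodule.mem_sup_right (Submodule.mem_span_singleton_self _)
    · omega

lemma rank_lt_of_Glrr_pred {y : ℕ → ℝ} {s K : ℕ} (h : Glrr y s (K + 1)) :
    (hank y (s + 2) K).rank + 2 ≤ s + 2 := by
  obtain ⟨b, hb, hker⟩ := h
  have h1 : Matrix.vecMul (Fin.snoc b 0 : Fin (s + 2) → ℝ) (hank y (s + 2) K) = 0 := by
    funext j
    rw [vecMul_hank_apply, Fin.sum_univ_castSucc]
    simp only [Fin.snoc_castSucc, Fin.snoc_last, zero_mul, add_zero, Fin.coe_castSucc]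
    have h2 := congrFun hker (⟨j.1, by omega⟩ : Fin (K + 1))
    rw [vecMul_hank_apply] at h2
    simpa using h2
  have h2 : Matrix.vecMul (Fin.cons 0 b : Fin (s + 2) → ℝ) (hank y (s + 2) K) = 0 := by
    funext j
    rw [vecMul_hank_apply, Fin.sum_univ_succ]
    simp only [Fin.cons_zero, Fin.cons_succ, zero_mul, zero_add]
    have h3 := congrFun hker (⟨j.1 + 1, by omega⟩ : Fin (K + 1))
    rw [vecMul_hank_apply] at h3
    simp only [Pi.zero_apply] at h3 ⊢
    rw [← h3]
    apply Finset.sum_congr rfl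
    intro i _
    congr 2
    simp only [Fin.val_succ]
    omega
  exact rank_add_two_le _ (pair_indep hb) h1 h2

lemma Glrr_congr (y : ℕ → ℝ) (m : ℕ) {K K' : ℕ} (h : K = K') :
    Glrr y m K ↔ Glrr y m K' := by subst h; exact Iff.rfl

lemma hank_rank_congr (y : ℕ → ℝ) (L : ℕ) {K K' : ℕ} (h : K = K') :
    (hank y L K).rank = (hank y L K').rank := by subst h; rfl

theorem key_s2 (y : ℕ → ℝ) (N r : ℕ) (hr : 2 * r < N) :
    (hank y (r + 1) (N - r)).rank = r ↔
      (Glrr y r (N - r) ∧ ∀ m, m < r → ¬ Glrr y m (N - m)) := by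
  constructor
  · intro h
    constructor
    · have hlt : (hank y (r + 1) (N - r)).rank < r + 1 := by omega
      obtain ⟨a, ha, h0⟩ := exists_vecMul_eq_zero _ hlt
      exact ⟨a, ha, h0⟩
    · intro m hm hGL
      obtain ⟨s, rfl⟩ : ∃ s, r = s + 1 := ⟨r - 1, by omega⟩
      have hup : Glrr y s (N - s) := Glrr.up (N := N) (by omega) hGL
      have h' : Glrr y s ((N - (s + 1)) + 1) :=
        (Glrr_congr y s (show N - s = N - (s + 1) + 1 by omega)).mp hup
      have hle : (hank y (s + 1 + 1) (N - (s + 1))).rank + 2 ≤ s + 2 :=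
        rank_lt_of_Glrr_pred h'
      omega
  · rintro ⟨⟨a, ha, h0⟩, hmin⟩
    have hub : (hank y (r + 1) (N - r)).rank < r + 1 := rank_lt_of_vecMul_eq_zero _ ha h0
    rcases Nat.lt_or_ge ((hank y (r + 1) (N - r)).rank) r with hlow | hge
    · exfalso
      obtain ⟨s, rfl⟩ : ∃ s, r = s + 1 := ⟨r - 1, by omega⟩
      rcases Nat.lt_or_ge ((hank y (s + 1) (N - s)).rank) (s + 1) with hl2 | hg2
      · obtain ⟨b, hb, hbk⟩ := exists_vecMul_eq_zero _ hl2
        exact hmin s (by omega) ⟨b, hb, hbk⟩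
      · have hfull : (hank y (s + 1) (N - (s + 1) + 1)).rank = s + 1 := by
          rw [hank_rank_congr y (s + 1) (show N - (s + 1) + 1 = N - s by omega)]
          have hhh := Matrix.rank_le_card_height (hank y (s + 1) (N - s))
          simp only [Fintype.card_fin] at hhh
          omega
        exact hankel_step y (s + 1) (N - (s + 1)) (by omega) hfull hlow
    · omega

/-- for `2r < N`, `rank T_{r+1}(Y) = r` iff `Y` is governed by a GLRR of
order `r` (a nonzero `a ∈ ℝ^{r+1}` with `aᵀ T_{r+1}(Y) = 0`) and no GLRR of smaller
order (for every `m < r` there is no nonzero `b ∈ ℝ^{m+1}` with `bᵀ T_{m+1}(Y) = 0`). -/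
theorem stmt2 (N r : ℕ) (hr : 2 * r < N) (Y : Fin N → ℝ) :
    (traj N (r + 1) Y).rank = r ↔
      ((∃ a : Fin (r + 1) → ℝ, a ≠ 0 ∧ Matrix.vecMul a (traj N (r + 1) Y) = 0) ∧
        ∀ m : ℕ, m < r →
          ¬ ∃ b : Fin (m + 1) → ℝ, b ≠ 0 ∧ Matrix.vecMul b (traj N (m + 1) Y) = 0) := by
  classical
  set y : ℕ → ℝ := fun n => if h : n < N then Y ⟨n, h⟩ else 0 with hydef
  have htraj : ∀ L : ℕ, traj N L Y = hank y L (N + 1 - L) := by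
    intro L
    ext i j
    have h1 := i.2
    have h2 := j.2
    have hij : i.1 + j.1 < N := by omega
    show Y ⟨i.1 + j.1, by omega⟩ = y (i.1 + j.1)
    rw [hydef]
    simp only [hij, dif_pos]
  rw [htraj (r + 1),
    hank_rank_congr y (r + 1) (show N + 1 - (r + 1) = N - r from by omega), key_s2 y N r hr]
  apply and_congr
  · exact Glrr_congr y r (show N - r = N + 1 - (r + 1) from by omega)
  · refine forall_congr' fun m => imp_congr Iff.rfl (not_congr ?_)
    rw [htraj (m + 1)]
    exact Glrr_congr y m (show N - m = N + 1 - (m + 1) from by omega)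
end

section
/- Let r < N, let a ∈ ℝ^{r+1}, and suppose g_a(ω^j) ≠ 0 for all j = 0,…,N−1, where ω = exp(2πi/N). Let M ∈ ℝ^{(N−r)×q} and let M̃ ∈ ℂ^{N×q} be M extended by r zero rows at the bottom. Define F̂ ∈ ℂ^{N×q} column-wise by the discrete Fourier formula: for each column index l, F̂_{k+1,l} = (1/N) Σ_{j=0}^{N−1} ω^{kj} (g_a(ω^j))^{−1} Σ_{m=0}^{N−1} ω^{−jm} M̃_{m+1,l}, for k = 0,…,N−1. Then Q^T(a) F̂ = M. -/
open Matrix Finset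

/-- The banded Toeplitz matrix `Qᵀ(c) ∈ ℝ^{(M-k)×M}` of a vector `c ∈ ℝ^{k+1}`. -/
def QtM (M k : ℕ) (c : Fin (k + 1) → ℝ) : Matrix (Fin (M - k)) (Fin M) ℝ :=
  Matrix.of fun i j =>
    if h : i.1 ≤ j.1 ∧ j.1 ≤ i.1 + k then c ⟨j.1 - i.1, by omega⟩ else 0

/-- The characteristic polynomial `g_a(z) = Σ_{k=0}^{r} a_{k+1} z^k`. -/
noncomputable def gpoly (r : ℕ) (a : Fin (r + 1) → ℂ) (z : ℂ) : ℂ :=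
  ∑ k : Fin (r + 1), a k * z ^ k.1

/-- The primitive `N`-th root of unity `ω = exp(2πi/N)`. -/
noncomputable def omegaN (N : ℕ) : ℂ := Complex.exp (2 * Real.pi * Complex.I / N)

lemma omega_prim (N : ℕ) (hN : N ≠ 0) : IsPrimitiveRoot (omegaN N) N :=
  Complex.isPrimitiveRoot_exp N hN

lemma orth {N : ℕ} (hN : N ≠ 0) (t : ℤ) :
    ∑ j : Fin N, (omegaN N) ^ (t * (j : ℤ)) = if (N : ℤ) ∣ t then (N : ℂ) else 0 := by
  have hprim := omega_prim N hN
  have h1 : ∀ j : Fin N, (omegaN N) ^ (t * (j : ℤ)) = ((omegaN N) ^ t) ^ (j : ℕ) := by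
    intro j; rw [_root_.zpow_mul, zpow_natCast]
  simp_rw [h1]
  rw [Fin.sum_univ_eq_sum_range (fun j => ((omegaN N) ^ t) ^ j)]
  by_cases hdvd : (N : ℤ) ∣ t
  · have hw : (omegaN N) ^ t = 1 := by
      obtain ⟨k, rfl⟩ := hdvd
      rw [_root_.zpow_mul, zpow_natCast, hprim.pow_eq_one, _root_.one_zpow]
    simp [hw, hdvd]
  · have hw1 : (omegaN N) ^ t ≠ 1 := fun h => hdvd ((hprim.zpow_eq_one_iff_dvd t).mp h)
    rw [geom_sum_eq hw1]
    have hwN : ((omegaN N) ^ t) ^ N = 1 := by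
      rw [← zpow_natCast, ← _root_.zpow_mul, mul_comm, _root_.zpow_mul, zpow_natCast, hprim.pow_eq_one, _root_.one_zpow]
    simp [hwN, hdvd]

/-- if `g_a` does not vanish at `N`-th roots of unity, and `F̂ ∈ ℂ^{N×q}` is
defined column-wise by the discrete Fourier formula
`F̂_{k+1,l} = (1/N) Σ_j ω^{kj} g_a(ω^j)⁻¹ Σ_m ω^{-jm} M̃_{m+1,l}`,
where `M̃` is `M ∈ ℝ^{(N-r)×q}` extended by `r` zero rows, then `Qᵀ(a) F̂ = M`. -/
theorem stmt9 (N r q : ℕ) (hr : r < N) (a : Fin (r + 1) → ℝ)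
    (hg : ∀ j : Fin N, gpoly r (fun k => (a k : ℂ)) (omegaN N ^ j.1) ≠ 0)
    (M : Matrix (Fin (N - r)) (Fin q) ℝ)
    (Fhat : Matrix (Fin N) (Fin q) ℂ)
    (hF : ∀ (k : Fin N) (l : Fin q),
      Fhat k l = (N : ℂ)⁻¹ * ∑ j : Fin N,
        omegaN N ^ (k.1 * j.1) * (gpoly r (fun k => (a k : ℂ)) (omegaN N ^ j.1))⁻¹ *
          ∑ m : Fin N, (omegaN N ^ (j.1 * m.1))⁻¹ *
            (if h : m.1 < N - r then ((M ⟨m.1, h⟩ l : ℝ) : ℂ) else 0)) :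
    (QtM N r a).map (fun x : ℝ => (x : ℂ)) * Fhat = M.map (fun x : ℝ => (x : ℂ)) := by
  have hN : 0 < N := lt_of_le_of_lt (Nat.zero_le r) hr
  have hN0 : N ≠ 0 := hN.ne'
  have hNc : (N : ℂ) ≠ 0 := Nat.cast_ne_zero.mpr hN0
  have hζ0 : omegaN N ≠ 0 := Complex.exp_ne_zero _
  set ζ := omegaN N with hζdef
  ext i l
  rw [Matrix.mul_apply]
  simp only [Matrix.map_apply]
  set g : Fin N → ℂ := fun j => gpoly r (fun k => (a k : ℂ)) (ζ ^ j.1) with hgdef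
  set Mt : Fin N → ℂ := fun m => if h : m.1 < N - r then ((M ⟨m.1, h⟩ l : ℝ) : ℂ) else 0
    with hMtdef
  set S : Fin N → ℂ := fun j => ∑ m : Fin N, (ζ ^ (j.1 * m.1))⁻¹ * Mt m with hSdef
  have hQ : ∀ n : Fin N, ((QtM N r a i n : ℝ) : ℂ)
      = if h : i.1 ≤ n.1 ∧ n.1 ≤ i.1 + r then ((a ⟨n.1 - i.1, by omega⟩ : ℝ) : ℂ) else 0 := by
    intro n
    simp only [QtM, Matrix.of_apply]
    split <;> simp
  -- step 1: swap sums
  have step1 : ∑ n : Fin N, ((QtM N r a i n : ℝ) : ℂ) * Fhat n l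
      = (N : ℂ)⁻¹ * ∑ j : Fin N,
          (∑ n : Fin N, ((QtM N r a i n : ℝ) : ℂ) * ζ ^ (n.1 * j.1)) * ((g j)⁻¹ * S j) := by
    have : ∀ n : Fin N, Fhat n l
        = (N : ℂ)⁻¹ * ∑ j : Fin N, ζ ^ (n.1 * j.1) * (g j)⁻¹ * S j := fun n => hF n l
    simp_rw [this, Finset.mul_sum, Finset.sum_mul]
    rw [Finset.sum_comm]
    apply Finset.sum_congr rfl; intro j _
    rw [Finset.mul_sum]
    apply Finset.sum_congr rfl; intro n _
    ring
  -- step 2: row sum of Qt against powers of ζ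
  have hiN : i.1 + r < N := by have := i.2; omega
  have hrow : ∀ j : Fin N,
      ∑ n : Fin N, ((QtM N r a i n : ℝ) : ℂ) * ζ ^ (n.1 * j.1) = ζ ^ (i.1 * j.1) * g j := by
    intro j
    set e : Fin (r + 1) → Fin N := fun k => ⟨i.1 + k.1, by omega⟩ with hedef
    have he : Function.Injective e := by
      intro x y hxy
      have : i.1 + x.1 = i.1 + y.1 := congrArg Fin.val hxy
      exact Fin.ext (by omega)
    have hsub : (Finset.univ.image e) ⊆ Finset.univ := Finset.subset_univ _
    rw [← Finset.sum_subset hsub]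
    · rw [Finset.sum_image (fun x _ y _ h => he h)]
      have : ∀ k : Fin (r + 1),
          ((QtM N r a i (e k) : ℝ) : ℂ) * ζ ^ ((e k).1 * j.1)
            = ((a k : ℝ) : ℂ) * (ζ ^ (i.1 * j.1) * (ζ ^ j.1) ^ k.1) := by
        intro k
        have hcond : i.1 ≤ (e k).1 ∧ (e k).1 ≤ i.1 + r := by
          constructor <;> simp [hedef] <;> omega
        rw [hQ, dif_pos hcond]
        have hk : (⟨(e k).1 - i.1, by omega⟩ : Fin (r + 1)) = k := by
          apply Fin.ext; simp [hedef]
        rw [hk]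
        have hexp : (e k).1 * j.1 = i.1 * j.1 + j.1 * k.1 := by
          show (i.1 + k.1) * j.1 = i.1 * j.1 + j.1 * k.1
          ring
        rw [hexp, pow_add, pow_mul, pow_mul]
      simp_rw [this]
      rw [hgdef]
      simp only [gpoly]
      rw [Finset.mul_sum]
      apply Finset.sum_congr rfl; intro k _
      ring
    · intro n _ hn
      rw [hQ]
      rw [dif_neg, zero_mul]
      intro hcond
      apply hn
      rw [Finset.mem_image]
      refine ⟨⟨n.1 - i.1, by omega⟩, Finset.mem_univ _, ?_⟩
      apply Fin.ext; simp [hedef]; omega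
  -- combine: cancel g
  rw [step1]
  have step3 : ∀ j : Fin N,
      (∑ n : Fin N, ((QtM N r a i n : ℝ) : ℂ) * ζ ^ (n.1 * j.1)) * ((g j)⁻¹ * S j)
        = ζ ^ (i.1 * j.1) * S j := by
    intro j
    rw [hrow j]
    have hgj : g j ≠ 0 := hg j
    field_simp
  simp_rw [step3]
  -- step 4: orthogonality
  have step4 : ∑ j : Fin N, ζ ^ (i.1 * j.1) * S j
      = ∑ m : Fin N, Mt m * ∑ j : Fin N, ζ ^ (((i.1 : ℤ) - (m.1 : ℤ)) * (j : ℤ)) := by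
    simp_rw [hSdef, Finset.mul_sum]
    rw [Finset.sum_comm]
    apply Finset.sum_congr rfl; intro m _
    apply Finset.sum_congr rfl; intro j _
    have key : ζ ^ (i.1 * j.1) * (ζ ^ (j.1 * m.1))⁻¹
        = ζ ^ (((i.1 : ℤ) - (m.1 : ℤ)) * (j : ℤ)) := by
      rw [← zpow_natCast ζ (i.1 * j.1), ← zpow_natCast ζ (j.1 * m.1), ← _root_.zpow_neg,
        ← zpow_add₀ hζ0]
      congr 1
      push_cast
      ring
    calc ζ ^ (i.1 * j.1) * ((ζ ^ (j.1 * m.1))⁻¹ * Mt m)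
        = (ζ ^ (i.1 * j.1) * (ζ ^ (j.1 * m.1))⁻¹) * Mt m := by ring
      _ = Mt m * ζ ^ (((i.1 : ℤ) - (m.1 : ℤ)) * (j : ℤ)) := by rw [key]; ring
  rw [step4]
  have hdvditer : ∀ m : Fin N,
      ((N : ℤ) ∣ ((i.1 : ℤ) - (m.1 : ℤ))) ↔ m.1 = i.1 := by
    intro m
    constructor
    · intro hd
      have h1 : ((i.1 : ℤ) - (m.1 : ℤ)).natAbs < (N : ℤ).natAbs := by
        have := m.2
        simp only [Int.natAbs_natCast]
        omega
      have := Int.eq_zero_of_dvd_of_natAbs_lt_natAbs hd h1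
      omega
    · intro h; rw [show (i.1 : ℤ) = (m.1 : ℤ) by omega]; simp
  have step5 : ∑ m : Fin N, Mt m * ∑ j : Fin N, ζ ^ (((i.1 : ℤ) - (m.1 : ℤ)) * (j : ℤ))
      = Mt ⟨i.1, by omega⟩ * N := by
    rw [Finset.sum_eq_single (⟨i.1, by omega⟩ : Fin N)]
    · rw [orth hN0, if_pos (by simp)]
    · intro m _ hm
      rw [orth hN0, if_neg, mul_zero]
      intro hd
      exact hm (Fin.ext ((hdvditer m).mp hd))
    · intro h; exact absurd (Finset.mem_univ _) h
  rw [step5, hMtdef]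
  have hi : i.1 < N - r := i.2
  simp only [dif_pos hi]
  rw [mul_comm (↑(M ⟨i.1, hi⟩ l) : ℂ) (N : ℂ), ← mul_assoc, inv_mul_cancel₀ hNc, one_mul]
end

section
/- (Weighted Frisch–Waugh–Lovell) Let W ∈ ℝ^{N×N} be symmetric positive definite, A ∈ ℝ^{N×p}, B ∈ ℝ^{N×q}, and suppose the partitioned matrix J = [A B] ∈ ℝ^{N×(p+q)} has full column rank p+q. Let Π_A = A(A^T W A)^{−1} A^T W and B̃ = (I_N − Π_A)B. Then A^T W A, J^T W J, and B̃^T W B̃ are invertible, and for every y ∈ ℝ^N the vector of the last q components of (J^T W J)^{−1} J^T W y equals (B̃^T W B̃)^{−1} B̃^T W (I_N − Π_A) y. -/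
open Matrix

lemma aux_inj {m : Type*} [Fintype m] [DecidableEq m] {N : ℕ} (J : Matrix (Fin N) m ℝ)
    (h : J.rank = Fintype.card m) : ∀ v, J *ᵥ v = 0 → v = 0 := by
  intro v hv
  have h1 := LinearMap.finrank_range_add_finrank_ker J.mulVecLin
  unfold Matrix.rank at h
  have hcard : Module.finrank ℝ (m → ℝ) = Fintype.card m := by simp
  have hker : Module.finrank ℝ (LinearMap.ker J.mulVecLin) = 0 := by omega
  have hbot : LinearMap.ker J.mulVecLin = ⊥ := Submodule.finrank_eq_zero.mp hker
  have hmem : v ∈ LinearMap.ker J.mulVecLin := by simpa [LinearMap.mem_ker] using hv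
  rw [hbot] at hmem
  simpa using hmem

lemma aux_isUnit {m : Type*} [Fintype m] [DecidableEq m] {N : ℕ}
    (W : Matrix (Fin N) (Fin N) ℝ) (hW : W.PosDef) (X : Matrix (Fin N) m ℝ)
    (hX : ∀ v, X *ᵥ v = 0 → v = 0) : IsUnit (Xᵀ * W * X) := by
  rw [← Matrix.mulVec_injective_iff_isUnit]
  have key : ∀ v, (Xᵀ * W * X) *ᵥ v = 0 → v = 0 := by
    intro v hv
    by_contra hv0
    have hXv : X *ᵥ v ≠ 0 := fun h => hv0 (hX v h)
    have hpos := hW.dotProduct_mulVec_pos hXv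
    have : star (X *ᵥ v) ⬝ᵥ (W *ᵥ (X *ᵥ v)) = v ⬝ᵥ ((Xᵀ * W * X) *ᵥ v) := by
      simp [star_trivial, ← Matrix.mulVec_mulVec, Matrix.dotProduct_mulVec,
        Matrix.vecMul_transpose]
    rw [this, hv] at hpos
    simp at hpos
  intro a b hab
  have h0 : (Xᵀ * W * X) *ᵥ (a - b) = 0 := by rw [Matrix.mulVec_sub, hab, sub_self]
  exact sub_eq_zero.mp (key _ h0)

/-- Weighted Frisch–Waugh–Lovell: for symmetric positive definite `W`
and `J = [A B]` of full column rank, with `Π_A = A(AᵀWA)⁻¹AᵀW` and `B̃ = (I - Π_A)B`,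
the matrices `AᵀWA`, `JᵀWJ`, `B̃ᵀWB̃` are invertible and for every `y` the last `q`
components of `(JᵀWJ)⁻¹JᵀW y` equal `(B̃ᵀWB̃)⁻¹B̃ᵀW(I - Π_A) y`. -/
theorem stmt11 (N p q : ℕ) (W : Matrix (Fin N) (Fin N) ℝ) (hW : W.PosDef)
    (A : Matrix (Fin N) (Fin p) ℝ) (B : Matrix (Fin N) (Fin q) ℝ)
    (hrank : (Matrix.fromCols A B).rank = p + q) :
    let J := Matrix.fromCols A B
    let PiA := A * (Aᵀ * W * A)⁻¹ * Aᵀ * W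
    let Bt := (1 - PiA) * B
    IsUnit (Aᵀ * W * A) ∧ IsUnit (Jᵀ * W * J) ∧ IsUnit (Btᵀ * W * Bt) ∧
      ∀ (y : Fin N → ℝ) (i : Fin q),
        ((Jᵀ * W * J)⁻¹ * Jᵀ * W).mulVec y (Sum.inr i)
          = ((Btᵀ * W * Bt)⁻¹ * Btᵀ * W * (1 - PiA)).mulVec y i := by
  intro J PiA Bt
  have hJ : J = Matrix.fromCols A B := rfl
  have hPiA : PiA = A * (Aᵀ * W * A)⁻¹ * Aᵀ * W := rfl
  have hBt : Bt = (1 - PiA) * B := rfl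
  have hWt : Wᵀ = W := by simpa using hW.1.eq
  -- injectivity of J
  have hJinj : ∀ v, J *ᵥ v = 0 → v = 0 := by
    apply aux_inj
    simpa using hrank
  -- injectivity of A
  have hAinj : ∀ v, A *ᵥ v = 0 → v = 0 := by
    intro v hv
    have h0 : J *ᵥ (Sum.elim v 0) = 0 := by
      rw [hJ, Matrix.fromCols_mulVec_sumElim, hv]
      simp
    have h1 := hJinj _ h0
    funext i
    exact congrFun h1 (Sum.inl i)
  have hCU : IsUnit (Aᵀ * W * A) := aux_isUnit W hW A hAinj
  have hCd : IsUnit (Aᵀ * W * A).det := (Matrix.isUnit_iff_isUnit_det _).mp hCU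
  have hJU : IsUnit (Jᵀ * W * J) := aux_isUnit W hW J hJinj
  have hJd : IsUnit (Jᵀ * W * J).det := (Matrix.isUnit_iff_isUnit_det _).mp hJU
  -- injectivity of Bt
  have hBtinj : ∀ v, Bt *ᵥ v = 0 → v = 0 := by
    intro v hv
    set u := ((Aᵀ * W * A)⁻¹ * Aᵀ * W * B) *ᵥ v with hu
    have hBtv : Bt *ᵥ v = B *ᵥ v - A *ᵥ u := by
      rw [hBt, hPiA, Matrix.sub_mul, Matrix.one_mul, Matrix.sub_mulVec, hu,
        Matrix.mulVec_mulVec]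
      congr 2
      simp only [Matrix.mul_assoc]
    have h0 : J *ᵥ (Sum.elim (-u) v) = 0 := by
      rw [hJ, Matrix.fromCols_mulVec_sumElim, Matrix.mulVec_neg]
      rw [hBtv] at hv
      linear_combination (norm := module) hv
    have h1 := hJinj _ h0
    funext i
    exact congrFun h1 (Sum.inr i)
  have hDU : IsUnit (Btᵀ * W * Bt) := aux_isUnit W hW Bt hBtinj
  have hDd : IsUnit (Btᵀ * W * Bt).det := (Matrix.isUnit_iff_isUnit_det _).mp hDU
  refine ⟨hCU, hJU, hDU, ?_⟩
  -- algebraic helpers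
  have hCinvT : ((Aᵀ * W * A)⁻¹)ᵀ = (Aᵀ * W * A)⁻¹ := by
    rw [Matrix.transpose_nonsing_inv]
    congr 1
    simp [Matrix.transpose_mul, hWt, Matrix.mul_assoc]
  have hCcan : ∀ Z : Matrix (Fin p) (Fin N) ℝ,
      Aᵀ * (W * (A * ((Aᵀ * W * A)⁻¹ * Z))) = Z := by
    intro Z
    rw [show Aᵀ * (W * (A * ((Aᵀ * W * A)⁻¹ * Z))) = (Aᵀ * W * A) * ((Aᵀ * W * A)⁻¹ * Z) by
      simp [Matrix.mul_assoc], Matrix.mul_nonsing_inv_cancel_left _ _ hCd]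
  have hDcan : ∀ Z : Matrix (Fin q) (Fin N) ℝ,
      Btᵀ * (W * (Bt * ((Btᵀ * W * Bt)⁻¹ * Z))) = Z := by
    intro Z
    rw [show Btᵀ * (W * (Bt * ((Btᵀ * W * Bt)⁻¹ * Z))) = (Btᵀ * W * Bt) * ((Btᵀ * W * Bt)⁻¹ * Z) by
      simp [Matrix.mul_assoc], Matrix.mul_nonsing_inv_cancel_left _ _ hDd]
  have hCfix : Aᵀ * (W * A) = Aᵀ * W * A := (Matrix.mul_assoc _ _ _).symm
  have hPiTW : PiAᵀ * W = W * PiA := by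
    rw [hPiA]
    simp only [Matrix.transpose_mul, Matrix.transpose_transpose]
    rw [hWt, hCinvT]
    simp only [Matrix.mul_assoc]
  have hPi2 : PiA * PiA = PiA := by
    rw [hPiA]
    simp only [Matrix.mul_assoc]
    simp only [hCfix]
    rw [hCcan]
  have hQ2 : (1 - PiA) * (1 - PiA) = 1 - PiA := by
    simp only [Matrix.mul_sub, Matrix.sub_mul, Matrix.mul_one, Matrix.one_mul, hPi2]
    abel
  have hQW : (1 - PiA)ᵀ * W = W * (1 - PiA) := by
    rw [Matrix.transpose_sub, Matrix.transpose_one, Matrix.sub_mul, Matrix.mul_sub,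
      Matrix.one_mul, Matrix.mul_one, hPiTW]
  have hBtWZ : ∀ Z : Matrix (Fin N) (Fin N) ℝ,
      Bᵀ * (W * ((1 - PiA) * Z)) = Btᵀ * (W * Z) := by
    intro Z
    rw [hBt, Matrix.transpose_mul, Matrix.mul_assoc, ← Matrix.mul_assoc ((1 - PiA)ᵀ), hQW,
      Matrix.mul_assoc]
  have hBtWB : ∀ Y : Matrix (Fin q) (Fin N) ℝ,
      Btᵀ * (W * (B * Y)) = Btᵀ * (W * (Bt * Y)) := by
    intro Y
    rw [← hBtWZ (B * Y)]
    have h2 : (1 - PiA) * (B * Y) = (1 - PiA) * ((1 - PiA) * (B * Y)) := by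
      simp only [← Matrix.mul_assoc, hQ2]
    rw [h2, hBtWZ ((1 - PiA) * (B * Y))]
    rw [hBt, Matrix.mul_assoc]
  have hAWPiZ : ∀ Z : Matrix (Fin N) (Fin N) ℝ,
      Aᵀ * (W * (PiA * Z)) = Aᵀ * (W * Z) := by
    intro Z
    have h1 : PiA * Z = A * ((Aᵀ * W * A)⁻¹ * (Aᵀ * (W * Z))) := by
      rw [hPiA]; simp only [Matrix.mul_assoc]
    rw [h1, hCcan]
  have hAWPi : Aᵀ * (W * PiA) = Aᵀ * W := by
    rw [hPiA]
    simp only [Matrix.mul_assoc]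
    simp only [hCfix]
    rw [hCcan]
  -- the candidate solution blocks
  set M : Matrix (Fin q) (Fin N) ℝ := (Btᵀ * W * Bt)⁻¹ * (Btᵀ * (W * (1 - PiA))) with hM
  set X₁ : Matrix (Fin p) (Fin N) ℝ := (Aᵀ * W * A)⁻¹ * (Aᵀ * (W * (1 - B * M))) with hX₁
  have e : A * X₁ + B * M = PiA + (1 - PiA) * (B * M) := by
    have hPiapp : A * ((Aᵀ * W * A)⁻¹ * (Aᵀ * (W * (1 - B * M)))) = PiA * (1 - B * M) := by
      rw [hPiA]; simp only [Matrix.mul_assoc]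
    rw [hX₁, hPiapp]
    simp only [Matrix.mul_sub, Matrix.sub_mul, Matrix.mul_one, Matrix.one_mul]
    abel
  have hcore : Bᵀ * (W * ((1 - PiA) * (B * M))) = Bᵀ * (W * (1 - PiA)) := by
    rw [hBtWZ (B * M), hBtWB M, hM]
    rw [hDcan (Btᵀ * (W * (1 - PiA)))]
    rw [← hBtWZ (1 - PiA), hQ2]
  have E1 : Aᵀ * (W * (A * X₁ + B * M)) = Aᵀ * W := by
    rw [e]
    simp only [Matrix.mul_add, Matrix.sub_mul, Matrix.mul_sub, Matrix.one_mul]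
    rw [hAWPi, hAWPiZ]
    abel
  have E2 : Bᵀ * (W * (A * X₁ + B * M)) = Bᵀ * W := by
    rw [e]
    simp only [Matrix.mul_add]
    rw [hcore]
    simp only [Matrix.mul_sub, Matrix.mul_one]
    abel
  have key : (Jᵀ * W * J) * (Matrix.fromRows X₁ M) = Jᵀ * W := by
    have hJX : J * Matrix.fromRows X₁ M = A * X₁ + B * M := by
      rw [hJ, Matrix.fromCols_mul_fromRows]
    rw [Matrix.mul_assoc (Jᵀ * W), hJX, hJ, Matrix.transpose_fromCols, Matrix.mul_assoc,
      Matrix.fromRows_mul, Matrix.fromRows_mul, E1, E2]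
  have hfin : (Jᵀ * W * J)⁻¹ * Jᵀ * W = Matrix.fromRows X₁ M := by
    have h := congrArg (fun Z => (Jᵀ * W * J)⁻¹ * Z) key
    rw [Matrix.nonsing_inv_mul_cancel_left _ _ hJd] at h
    rw [Matrix.mul_assoc]
    exact h.symm
  intro y i
  have hMe : (Btᵀ * W * Bt)⁻¹ * Btᵀ * W * (1 - PiA) = M := by
    rw [hM]
    simp only [Matrix.mul_assoc]
  rw [hfin, Matrix.fromRows_mulVec, hMe]
  simp
end

section
/- (Equivalence of the modified Gauss–Newton direction) Let 2r < N, let W ∈ ℝ^{N×N} be symmetric positive definite, x ∈ ℝ^N, a ∈ ℝ^{r+1} nonzero, and τ ∈ {1,…,r+1}. Let Z ∈ ℝ^{N×r} be a matrix whose columns form a basis of Z(a) and set Π = Z(Z^T W Z)^{−1} Z^T W, s = Πx, S = T_{r+1}(s) ∈ ℝ^{(r+1)×(N−r)}, and M = −(S_{K(τ)})^T ∈ ℝ^{(N−r)×r}, where S_{K(τ)} is S with its τ-th row deleted (K(τ) = {1,…,r+1}\{τ}). Suppose F_s ∈ ℝ^{N×r} has column space equal to Z(a), F_a ∈ ℝ^{N×r}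 satisfies Q^T(a)F_a = M, and the matrix J = [F_s F_a] ∈ ℝ^{N×2r} has full column rank 2r. Then for every matrix F̂ ∈ ℝ^{N×r} with Q^T(a)F̂ = M, the matrix B = (I_N − Π)F̂ has invertible Gram matrix B^T W B, and the vector of the last r components of (J^T W J)^{−1} J^T W (x − s) equals (B^T W B)^{−1} B^T W (x − s). -/
open Matrix

/- Auxiliary lemmas -/

lemma aux_mulVec_injective_of_isUnit {m : Type*} [Fintype m] [DecidableEq m]
    {A : Matrix m m ℝ} (h : IsUnit A.det) {c : m → ℝ} (hc : A *ᵥ c = 0) : c = 0 := by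
  have h2 : A⁻¹ *ᵥ (A *ᵥ c) = A⁻¹ *ᵥ 0 := by rw [hc]
  simpa [Matrix.mulVec_mulVec, Matrix.nonsing_inv_mul A h] using h2

lemma aux_gramPD {n m : Type*} [Fintype n] [Fintype m]
    {W : Matrix n n ℝ} (hW : W.PosDef) (A : Matrix n m ℝ)
    (hA : ∀ c, A *ᵥ c = 0 → c = 0) : (Aᵀ * W * A).PosDef := by
  have hWt : Wᵀ = W := by
    have := hW.1
    rwa [Matrix.IsHermitian, Matrix.conjTranspose_eq_transpose_of_trivial] at this
  refine Matrix.PosDef.of_dotProduct_mulVec_pos ?_ ?_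
  · show (Aᵀ * W * A)ᴴ = Aᵀ * W * A
    rw [Matrix.conjTranspose_eq_transpose_of_trivial, Matrix.transpose_mul,
      Matrix.transpose_mul, Matrix.transpose_transpose, hWt, Matrix.mul_assoc]
  · intro v hv
    have hAv : A *ᵥ v ≠ 0 := fun h0 => hv (hA v h0)
    have key : star v ⬝ᵥ (Aᵀ * W * A) *ᵥ v = star (A *ᵥ v) ⬝ᵥ W *ᵥ (A *ᵥ v) := by
      have h1 : (Aᵀ * W * A) *ᵥ v = Aᵀ *ᵥ (W *ᵥ (A *ᵥ v)) := by
        rw [Matrix.mulVec_mulVec, Matrix.mulVec_mulVec]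
      rw [h1]
      have : star v = v := rfl
      rw [this]
      have : star (A *ᵥ v) = A *ᵥ v := rfl
      rw [this]
      rw [Matrix.dotProduct_mulVec v Aᵀ, Matrix.vecMul_transpose]
    rw [key]
    exact hW.dotProduct_mulVec_pos hAv

lemma aux_gram_isUnit {n m : Type*} [Fintype n] [Fintype m] [DecidableEq m]
    {W : Matrix n n ℝ} (hW : W.PosDef) (A : Matrix n m ℝ)
    (hA : ∀ c, A *ᵥ c = 0 → c = 0) : IsUnit (Aᵀ * W * A).det :=
  isUnit_iff_ne_zero.2 (aux_gramPD hW A hA).det_pos.ne'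

/-- Equivalence of the modified Gauss–Newton direction.
Here `Z` has columns forming a basis of `Z(a) = ker Qᵀ(a)`, `Π = Z(ZᵀWZ)⁻¹ZᵀW`,
`s = Πx`, and `M = −(S_{K(τ)})ᵀ` where `S = T_{r+1}(s)` is the Hankel trajectory matrix
of `s` and `K(τ)` deletes the `τ`-th row (encoded via `Fin.succAbove`, 0-based:
`M j k = −s_{(τ.succAbove k) + j}`). With `F_s` spanning `Z(a)`, `Qᵀ(a)F_a = M`,
`J = [F_s F_a]` of full column rank `2r`, and any `F̂` with `Qᵀ(a)F̂ = M`,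
setting `B = (I − Π)F̂`, the Gram matrix `BᵀWB` is invertible and the last `r`
components of `(JᵀWJ)⁻¹JᵀW(x − s)` equal `(BᵀWB)⁻¹BᵀW(x − s)`. -/
theorem stmt13 (N r : ℕ) (hN : 2 * r < N)
    (W : Matrix (Fin N) (Fin N) ℝ) (hW : W.PosDef)
    (x : Fin N → ℝ) (a : Fin (r + 1) → ℝ) (ha : a ≠ 0) (τ : Fin (r + 1))
    (Z : Matrix (Fin N) (Fin r) ℝ)
    (hZli : LinearIndependent ℝ Z.transpose)
    (hZspan : LinearMap.range (Matrix.mulVecLin Z)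
      = LinearMap.ker (Matrix.mulVecLin (QtM N r a)))
    (Pi : Matrix (Fin N) (Fin N) ℝ) (hPi : Pi = Z * (Zᵀ * W * Z)⁻¹ * Zᵀ * W)
    (s : Fin N → ℝ) (hs : s = Pi.mulVec x)
    (M : Matrix (Fin (N - r)) (Fin r) ℝ)
    (hM : ∀ (j : Fin (N - r)) (k : Fin r),
      M j k = - s ⟨(τ.succAbove k).1 + j.1, by have := (τ.succAbove k).2; have := j.2; omega⟩)
    (Fs : Matrix (Fin N) (Fin r) ℝ)
    (hFs : LinearMap.range (Matrix.mulVecLin Fs)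
      = LinearMap.ker (Matrix.mulVecLin (QtM N r a)))
    (Fa : Matrix (Fin N) (Fin r) ℝ) (hFa : QtM N r a * Fa = M)
    (J : Matrix (Fin N) (Fin r ⊕ Fin r) ℝ) (hJ : J = Matrix.fromCols Fs Fa)
    (hJrank : J.rank = 2 * r)
    (Fhat : Matrix (Fin N) (Fin r) ℝ) (hFhat : QtM N r a * Fhat = M)
    (B : Matrix (Fin N) (Fin r) ℝ) (hB : B = (1 - Pi) * Fhat) :
    IsUnit (Bᵀ * W * B) ∧
      ∀ i : Fin r,
        ((Jᵀ * W * J)⁻¹ * Jᵀ * W).mulVec (x - s) (Sum.inr i)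
          = ((Bᵀ * W * B)⁻¹ * Bᵀ * W).mulVec (x - s) i := by
  have hWt : Wᵀ = W := by
    have := hW.1
    rwa [Matrix.IsHermitian, Matrix.conjTranspose_eq_transpose_of_trivial] at this
  -- Z has injective mulVec
  have hZinj : ∀ c : Fin r → ℝ, Z *ᵥ c = 0 → c = 0 := by
    intro c hc
    have hsum : ∑ i, c i • Z.transpose i = 0 := by
      funext j
      have hj := congrFun hc j
      simp only [Matrix.mulVec, dotProduct] at hj
      simpa [Finset.sum_apply, Matrix.transpose_apply, mul_comm] using hj
    have := Fintype.linearIndependent_iff.1 hZli c hsum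
    funext i; exact this i
  -- Gram matrix of Z is invertible
  have hZdet : IsUnit (Zᵀ * W * Z).det := aux_gram_isUnit hW Z hZinj
  -- reassociated form of Pi
  have hPi' : Pi = Z * ((Zᵀ * W * Z)⁻¹ * (Zᵀ * W)) := by
    rw [hPi]; simp only [Matrix.mul_assoc]
  -- Pi * Z = Z
  have hPiZ : Pi * Z = Z := by
    have h1 : (Zᵀ * W * Z)⁻¹ * (Zᵀ * W * Z) = 1 := Matrix.nonsing_inv_mul _ hZdet
    rw [hPi]
    calc Z * (Zᵀ * W * Z)⁻¹ * Zᵀ * W * Z = Z * ((Zᵀ * W * Z)⁻¹ * (Zᵀ * W * Z)) := by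
          simp only [Matrix.mul_assoc]
      _ = Z := by rw [h1, Matrix.mul_one]
  -- Pi fixes any matrix whose columns lie in the range of Z
  have hfix : ∀ {m : ℕ} (D : Matrix (Fin N) (Fin m) ℝ),
      (∀ c, ∃ d, D *ᵥ c = Z *ᵥ d) → Pi * D = D := by
    intro m D hD
    ext j k
    obtain ⟨d, hd⟩ := hD (_root_.Pi.single k 1)
    have h1 : Dᵀ k = Z *ᵥ d := by rw [← hd, Matrix.mulVec_single_one]; rfl
    have h2 : (fun l => D l k) = Z *ᵥ d := h1
    calc (Pi * D) j k = (Pi *ᵥ (fun l => D l k)) j := by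
          simp [Matrix.mul_apply, Matrix.mulVec, dotProduct]
      _ = (Pi *ᵥ (Z *ᵥ d)) j := by rw [h2]
      _ = ((Pi * Z) *ᵥ d) j := by rw [Matrix.mulVec_mulVec]
      _ = (Z *ᵥ d) j := by rw [hPiZ]
      _ = D j k := by rw [← h2]
  -- Pi is idempotent
  have hPiPi : Pi * Pi = Pi := hfix Pi (fun c => ⟨((Zᵀ * W * Z)⁻¹ * (Zᵀ * W)) *ᵥ c, by
    rw [hPi', ← Matrix.mulVec_mulVec]⟩)
  have h1mP : Pi * (1 - Pi) = 0 := by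
    rw [Matrix.mul_sub, Matrix.mul_one, hPiPi, sub_self]
  have h1P1P : (1 - Pi) * (1 - Pi) = 1 - Pi := by
    rw [Matrix.sub_mul, Matrix.one_mul, h1mP, sub_zero]
  -- symmetry of the projector w.r.t. W
  have hWPi : W * Pi = Piᵀ * W := by
    have hGt : ((Zᵀ * W * Z)⁻¹)ᵀ = (Zᵀ * W * Z)⁻¹ := by
      rw [Matrix.transpose_nonsing_inv]
      congr 1
      rw [Matrix.transpose_mul, Matrix.transpose_mul, Matrix.transpose_transpose, hWt,
        Matrix.mul_assoc]
    rw [hPi]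
    simp only [Matrix.transpose_mul, Matrix.transpose_transpose, hGt, hWt]
    simp only [Matrix.mul_assoc]
  have hW1P : W * (1 - Pi) = (1 - Pi)ᵀ * W := by
    rw [Matrix.mul_sub, Matrix.mul_one, Matrix.transpose_sub, Matrix.sub_mul,
      Matrix.transpose_one, Matrix.one_mul, hWPi]
  -- ranges
  have hrangeFsZ : LinearMap.range (Matrix.mulVecLin Fs) = LinearMap.range (Matrix.mulVecLin Z) :=
    hFs.trans hZspan.symm
  have hcolFs : ∀ c, ∃ d, Fs *ᵥ c = Z *ᵥ d := by
    intro c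
    have : Fs *ᵥ c ∈ LinearMap.range (Matrix.mulVecLin Z) := by
      rw [← hrangeFsZ]; exact ⟨c, rfl⟩
    obtain ⟨d, hd⟩ := this
    exact ⟨d, hd.symm⟩
  have hPiFs : Pi * Fs = Fs := hfix Fs hcolFs
  -- Fhat - Fa has columns in range Z
  have hcolD : ∀ c, ∃ d, (Fhat - Fa) *ᵥ c = Z *ᵥ d := by
    intro c
    have hker : (Fhat - Fa) *ᵥ c ∈ LinearMap.ker (Matrix.mulVecLin (QtM N r a)) := by
      show (QtM N r a).mulVecLin ((Fhat - Fa) *ᵥ c) = 0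
      rw [Matrix.mulVecLin_apply, Matrix.mulVec_mulVec, Matrix.mul_sub, hFhat, hFa, sub_self,
        Matrix.zero_mulVec]
    rw [← hZspan] at hker
    obtain ⟨d, hd⟩ := hker
    exact ⟨d, hd.symm⟩
  have hPiD : Pi * (Fhat - Fa) = Fhat - Fa := hfix _ hcolD
  -- B = (1 - Pi) * Fa
  have hB' : B = (1 - Pi) * Fa := by
    have : (1 - Pi) * (Fhat - Fa) = 0 := by
      rw [Matrix.sub_mul, Matrix.one_mul, hPiD, sub_self]
    have h2 : (1 - Pi) * Fhat - (1 - Pi) * Fa = 0 := by rw [← Matrix.mul_sub, this]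
    rw [hB]; exact sub_eq_zero.1 h2
  -- injectivity of Fs
  have hZker : LinearMap.ker (Matrix.mulVecLin Z) = ⊥ := by
    rw [LinearMap.ker_eq_bot']
    intro c hc
    exact hZinj c (by rwa [Matrix.mulVecLin_apply] at hc)
  have hrkZ : Module.finrank ℝ (LinearMap.range (Matrix.mulVecLin Z)) = r := by
    have h0 := LinearMap.finrank_range_add_finrank_ker (Matrix.mulVecLin Z)
    rw [hZker, finrank_bot, Module.finrank_fin_fun] at h0
    omega
  have hFsinj : ∀ c : Fin r → ℝ, Fs *ᵥ c = 0 → c = 0 := by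
    have e2 := LinearMap.finrank_range_add_finrank_ker (Matrix.mulVecLin Fs)
    rw [hrangeFsZ, hrkZ, Module.finrank_fin_fun] at e2
    have hker : LinearMap.ker (Matrix.mulVecLin Fs) = ⊥ := Submodule.finrank_eq_zero.1 (by omega)
    intro c hc
    have hmem : c ∈ LinearMap.ker (Matrix.mulVecLin Fs) := by
      rw [LinearMap.mem_ker, Matrix.mulVecLin_apply]; exact hc
    rw [hker] at hmem
    simpa using hmem
  -- injectivity of J
  have hJinj : ∀ c : Fin r ⊕ Fin r → ℝ, J *ᵥ c = 0 → c = 0 := by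
    have e3 := LinearMap.finrank_range_add_finrank_ker (Matrix.mulVecLin J)
    have hr : Module.finrank ℝ (LinearMap.range (Matrix.mulVecLin J)) = 2 * r := hJrank
    rw [hr, Module.finrank_fintype_fun_eq_card] at e3
    simp only [Fintype.card_sum, Fintype.card_fin] at e3
    have hker : LinearMap.ker (Matrix.mulVecLin J) = ⊥ := Submodule.finrank_eq_zero.1 (by omega)
    intro c hc
    have hmem : c ∈ LinearMap.ker (Matrix.mulVecLin J) := by
      rw [LinearMap.mem_ker, Matrix.mulVecLin_apply]; exact hc
    rw [hker] at hmem
    simpa using hmem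
  -- injectivity of B
  have hBinj : ∀ c : Fin r → ℝ, B *ᵥ c = 0 → c = 0 := by
    intro c hc
    have h0 : ((1 - Pi) * Fa) *ᵥ c = 0 := by rw [← hB']; exact hc
    rw [← Matrix.mulVec_mulVec, Matrix.sub_mulVec, Matrix.one_mulVec] at h0
    have hFac : Fa *ᵥ c = Pi *ᵥ (Fa *ᵥ c) := sub_eq_zero.1 h0
    obtain ⟨e, he⟩ : ∃ e, Fs *ᵥ e = Fa *ᵥ c := by
      have hmem : Fa *ᵥ c ∈ LinearMap.range (Matrix.mulVecLin Fs) := by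
        rw [hrangeFsZ]
        refine ⟨((Zᵀ * W * Z)⁻¹ * (Zᵀ * W)) *ᵥ (Fa *ᵥ c), ?_⟩
        rw [Matrix.mulVecLin_apply, Matrix.mulVec_mulVec, ← hPi', ← hFac]
      obtain ⟨e, he⟩ := hmem
      exact ⟨e, he⟩
    have hJ0 : J *ᵥ (Sum.elim (-e) c) = 0 := by
      rw [hJ, Matrix.fromCols_mulVec_sumElim, Matrix.mulVec_neg, he]
      abel
    have := hJinj _ hJ0
    funext i
    exact congrFun this (Sum.inr i)
  -- key matrix identities
  have hFsW : Fsᵀ * W = Fsᵀ * W * Pi := by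
    conv_lhs => rw [← hPiFs]
    rw [Matrix.transpose_mul, Matrix.mul_assoc, ← hWPi, ← Matrix.mul_assoc]
  have hFsWB : Fsᵀ * W * B = 0 := by
    rw [hB, hFsW, Matrix.mul_assoc (Fsᵀ * W) Pi ((1 - Pi) * Fhat),
      ← Matrix.mul_assoc Pi (1 - Pi) Fhat, h1mP, Matrix.zero_mul, Matrix.mul_zero]
  have h4 : (1 - Pi) * B = B := by rw [hB, ← Matrix.mul_assoc, h1P1P]
  have hkeyFa : Faᵀ * W * (1 - Pi) = Bᵀ * W := by
    rw [Matrix.mul_assoc, hW1P, ← Matrix.mul_assoc, ← Matrix.transpose_mul, ← hB']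
  have hFaWB : Faᵀ * W * B = Bᵀ * W * B := by
    calc Faᵀ * W * B = Faᵀ * W * ((1 - Pi) * B) := by rw [h4]
      _ = Faᵀ * W * (1 - Pi) * B := (Matrix.mul_assoc _ _ _).symm
      _ = Bᵀ * W * B := by rw [hkeyFa]
  -- vector facts
  have hsZ : s = Z *ᵥ ((((Zᵀ * W * Z)⁻¹ * (Zᵀ * W))) *ᵥ x) := by
    rw [hs, hPi']
    exact (Matrix.mulVec_mulVec _ _ _).symm
  have hPis : Pi *ᵥ s = s := by
    conv_lhs => rw [hsZ]
    rw [Matrix.mulVec_mulVec, hPiZ, ← hsZ]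
  have hPiy : Pi *ᵥ (x - s) = 0 := by
    rw [Matrix.mulVec_sub, ← hs, hPis, sub_self]
  have hFsWy : (Fsᵀ * W) *ᵥ (x - s) = 0 := by
    rw [hFsW, ← Matrix.mulVec_mulVec, hPiy, Matrix.mulVec_zero]
  have hFaWy : (Faᵀ * W) *ᵥ (x - s) = (Bᵀ * W) *ᵥ (x - s) := by
    have h6 : (1 - Pi) *ᵥ (x - s) = (x - s) := by
      rw [Matrix.sub_mulVec, Matrix.one_mulVec, hPiy, sub_zero]
    calc (Faᵀ * W) *ᵥ (x - s) = (Faᵀ * W) *ᵥ ((1 - Pi) *ᵥ (x - s)) := by rw [h6]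
      _ = (Faᵀ * W * (1 - Pi)) *ᵥ (x - s) := by rw [Matrix.mulVec_mulVec]
      _ = (Bᵀ * W) *ᵥ (x - s) := by rw [hkeyFa]
  -- Gram matrices
  have hJdet : IsUnit (Jᵀ * W * J).det := aux_gram_isUnit hW J hJinj
  have hBdet : IsUnit (Bᵀ * W * B).det :=
    isUnit_iff_ne_zero.2 (aux_gramPD hW B hBinj).det_pos.ne'
  refine ⟨(Matrix.isUnit_iff_isUnit_det _).2 hBdet, ?_⟩
  intro i
  set v : Fin r ⊕ Fin r → ℝ := ((Jᵀ * W * J)⁻¹ * Jᵀ * W) *ᵥ (x - s) with hv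
  set v1 : Fin r → ℝ := fun j => v (Sum.inl j) with hv1
  set v2 : Fin r → ℝ := fun j => v (Sum.inr j) with hv2def
  have hsplit : v = Sum.elim v1 v2 := by funext j; cases j <;> rfl
  have hveq : (Jᵀ * W * J) *ᵥ v = (Jᵀ * W) *ᵥ (x - s) := by
    rw [hv, Matrix.mulVec_mulVec]
    congr 1
    rw [← Matrix.mul_assoc, ← Matrix.mul_assoc, Matrix.mul_nonsing_inv _ hJdet, Matrix.one_mul]
  have hveq' : Jᵀ *ᵥ (W *ᵥ (J *ᵥ v)) = Jᵀ *ᵥ (W *ᵥ (x - s)) := by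
    calc Jᵀ *ᵥ (W *ᵥ (J *ᵥ v)) = (Jᵀ * W * J) *ᵥ v := by
          rw [Matrix.mulVec_mulVec, Matrix.mulVec_mulVec]
      _ = (Jᵀ * W) *ᵥ (x - s) := hveq
      _ = Jᵀ *ᵥ (W *ᵥ (x - s)) := (Matrix.mulVec_mulVec _ _ _).symm
  have hcomp : ∀ u : Fin N → ℝ, (Jᵀ *ᵥ u) = Sum.elim (Fsᵀ *ᵥ u) (Faᵀ *ᵥ u) := by
    intro u; rw [hJ, Matrix.transpose_fromCols, Matrix.fromRows_mulVec]
  have hveq'' := hveq'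
  rw [hcomp, hcomp] at hveq''
  have h1 : Fsᵀ *ᵥ (W *ᵥ (J *ᵥ v)) = Fsᵀ *ᵥ (W *ᵥ (x - s)) := by
    funext j; exact congrFun hveq'' (Sum.inl j)
  have h2 : Faᵀ *ᵥ (W *ᵥ (J *ᵥ v)) = Faᵀ *ᵥ (W *ᵥ (x - s)) := by
    funext j; exact congrFun hveq'' (Sum.inr j)
  have hJv : J *ᵥ v = Fs *ᵥ v1 + Fa *ᵥ v2 := by
    conv_lhs => rw [hsplit]
    rw [hJ, Matrix.fromCols_mulVec_sumElim]
  have hBv2 : B *ᵥ v2 = Fa *ᵥ v2 - Pi *ᵥ (Fa *ᵥ v2) := by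
    rw [hB', ← Matrix.mulVec_mulVec, Matrix.sub_mulVec, Matrix.one_mulVec]
  obtain ⟨d1, hd1⟩ := hcolFs v1
  have hPiFa : Pi *ᵥ (Fa *ᵥ v2) = Z *ᵥ (((Zᵀ * W * Z)⁻¹ * (Zᵀ * W)) *ᵥ (Fa *ᵥ v2)) := by
    rw [hPi', ← Matrix.mulVec_mulVec]
  have hu : Fs *ᵥ v1 + Pi *ᵥ (Fa *ᵥ v2)
      = Z *ᵥ (d1 + ((Zᵀ * W * Z)⁻¹ * (Zᵀ * W)) *ᵥ (Fa *ᵥ v2)) := by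
    rw [hd1, hPiFa, ← Matrix.mulVec_add]
  obtain ⟨e0, he0⟩ : ∃ e0, Fs *ᵥ e0
      = Z *ᵥ (d1 + ((Zᵀ * W * Z)⁻¹ * (Zᵀ * W)) *ᵥ (Fa *ᵥ v2)) := by
    have hmem : Z *ᵥ (d1 + ((Zᵀ * W * Z)⁻¹ * (Zᵀ * W)) *ᵥ (Fa *ᵥ v2))
        ∈ LinearMap.range (Matrix.mulVecLin Fs) := by
      rw [hrangeFsZ]
      exact ⟨_, rfl⟩
    obtain ⟨e0, he0⟩ := hmem
    exact ⟨e0, he0⟩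
  have hJv2 : J *ᵥ v = Fs *ᵥ e0 + B *ᵥ v2 := by
    rw [hJv, hBv2, he0, ← hu]
    abel
  have hgrame0 : (Fsᵀ * W * Fs) *ᵥ e0 = 0 := by
    have hA := h1
    rw [hJv2] at hA
    have hL : Fsᵀ *ᵥ (W *ᵥ (Fs *ᵥ e0 + B *ᵥ v2))
        = (Fsᵀ * W * Fs) *ᵥ e0 + (Fsᵀ * W * B) *ᵥ v2 := by
      simp only [Matrix.mulVec_add, Matrix.mulVec_mulVec, Matrix.mul_assoc]
    have hR : Fsᵀ *ᵥ (W *ᵥ (x - s)) = 0 := by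
      rw [Matrix.mulVec_mulVec]; exact hFsWy
    rw [hL, hR, hFsWB, Matrix.zero_mulVec, add_zero] at hA
    exact hA
  have he00 : e0 = 0 := aux_mulVec_injective_of_isUnit (aux_gram_isUnit hW Fs hFsinj) hgrame0
  have hgramv2 : (Bᵀ * W * B) *ᵥ v2 = (Bᵀ * W) *ᵥ (x - s) := by
    have hA := h2
    rw [hJv2, he00, Matrix.mulVec_zero, zero_add] at hA
    simp only [Matrix.mulVec_mulVec] at hA
    rw [← Matrix.mul_assoc] at hA
    rw [hFaWB, hFaWy] at hA
    exact hA
  have hv2 : v2 = ((Bᵀ * W * B)⁻¹ * Bᵀ * W) *ᵥ (x - s) := by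
    have h5 : (Bᵀ * W * B)⁻¹ *ᵥ ((Bᵀ * W * B) *ᵥ v2)
        = (Bᵀ * W * B)⁻¹ *ᵥ ((Bᵀ * W) *ᵥ (x - s)) := by rw [hgramv2]
    rw [Matrix.mulVec_mulVec, Matrix.mulVec_mulVec, Matrix.nonsing_inv_mul _ hBdet,
      Matrix.one_mulVec] at h5
    rw [h5]
    simp only [Matrix.mul_assoc]
  exact congrFun hv2 i
end

section
/- (Tangent directions of the rank-r variety) Let 2r < N, let S ∈ ℝ^N satisfy rank T_{r+1}(S) = r, and let a ∈ ℝ^{r+1} be a nonzero vector with Q^T(a)S = 0. Let γ : ℝ → ℝ^N be differentiable at 0 with γ(0) = S, and suppose there is a neighborhood of 0 such that rank T_{r+1}(γ(t)) ≤ r for all t in this neighborhood. Then the derivative satisfies Q^T(a²) γ′(0) = 0, where a² = a∗a ∈ ℝ^{2r+1} is the acyclic self-convolution; i.e., every tangent direction of the set of series of rank at most r at the point S lies in Z(a²). -/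
open Matrix

/-- The acyclic convolution `a ∗ b ∈ ℝ^{m+n+1}` of `a ∈ ℝ^{m+1}` and `b ∈ ℝ^{n+1}`. -/
def aconv (m n : ℕ) (a : Fin (m + 1) → ℝ) (b : Fin (n + 1) → ℝ) : Fin (m + n + 1) → ℝ :=
  fun i => ∑ j : Fin (m + 1),
    if h : j.1 ≤ i.1 ∧ i.1 ≤ j.1 + n then a j * b ⟨i.1 - j.1, by omega⟩ else 0

/- ---------- auxiliary lemmas ---------- -/

lemma fin_app_congr {N : ℕ} (w : Fin N → ℝ) {x y : ℕ} {hx : x < N} {hy : y < N}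
    (h : x = y) : w ⟨x, hx⟩ = w ⟨y, hy⟩ := by subst h; rfl

noncomputable def crossVec {r : ℕ} (B : Matrix (Fin (r+1)) (Fin r) ℝ) : Fin (r+1) → ℝ :=
  fun i => (-1)^(i:ℕ) * (B.submatrix i.succAbove id).det

lemma det_cases {r : ℕ} (x : Fin (r+1) → ℝ) (B : Matrix (Fin (r+1)) (Fin r) ℝ) :
    (Matrix.of fun i (j : Fin (r+1)) => Fin.cases (x i) (B i) j).det
      = ∑ i, crossVec B i * x i := by
  rw [Matrix.det_succ_column_zero]
  refine Finset.sum_congr rfl fun i _ => ?_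
  have h1 : (Matrix.of fun i (j : Fin (r+1)) => Fin.cases (x i) (B i) j).submatrix
      i.succAbove Fin.succ = B.submatrix i.succAbove id := by
    ext p q
    simp [Matrix.submatrix]
  rw [h1]
  simp [crossVec]
  ring

lemma sum_window {M k : ℕ} (c : Fin (k+1) → ℝ) (g : Fin M → ℝ) (i : ℕ) (hik : i + k < M) :
    (∑ j : Fin M, if h : i ≤ j.1 ∧ j.1 ≤ i + k then c ⟨j.1 - i, by omega⟩ * g j else 0)
      = ∑ p : Fin (k+1), c p * g ⟨i + p.1, by have := p.2; omega⟩ := by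
  classical
  set F : Fin M → ℝ := fun j =>
    if h : i ≤ j.1 ∧ j.1 ≤ i + k then c ⟨j.1 - i, by omega⟩ * g j else 0 with hF
  set e : Fin (k+1) → Fin M := fun p => ⟨i + p.1, by have := p.2; omega⟩ with he
  have hinj : ∀ p ∈ Finset.univ, ∀ q ∈ Finset.univ, e p = e q → p = q := by
    intro p _ q _ h
    have : i + p.1 = i + q.1 := congrArg Fin.val h
    exact Fin.ext (by omega)
  have him : ∑ x ∈ Finset.univ.image e, F x = ∑ p, F (e p) := Finset.sum_image hinj
  have hsub : ∑ j : Fin M, F j = ∑ x ∈ Finset.univ.image e, F x := by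
    refine (Finset.sum_subset (Finset.subset_univ _) ?_).symm
    intro j _ hj
    rw [hF]
    refine dif_neg fun hcon => ?_
    exact hj (Finset.mem_image.mpr ⟨⟨j.1 - i, by omega⟩, Finset.mem_univ _,
      Fin.ext (by simp [he]; omega)⟩)
  rw [hsub, him]
  refine Finset.sum_congr rfl fun p _ => ?_
  have hcond : i ≤ (e p).1 ∧ (e p).1 ≤ i + k := by
    simp [he]; omega
  show (if h : i ≤ (e p).1 ∧ (e p).1 ≤ i + k then c ⟨(e p).1 - i, by omega⟩ * g (e p) else 0)
      = _
  rw [dif_pos hcond]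
  have h1 : (⟨(e p).1 - i, by omega⟩ : Fin (k+1)) = p := Fin.ext (by simp [he])
  rw [h1]

lemma cross_dot {r m : ℕ} (A : Matrix (Fin (r+1)) (Fin m) ℝ) (hA : A.rank ≤ r)
    (g : Fin r → Fin m) (j : Fin m) :
    ∑ i, crossVec (A.submatrix id g) i * A i j = 0 := by
  classical
  set h : Fin (r+1) → Fin m := fun k => Fin.cases j g k with hh
  have hmat : (Matrix.of fun i (k : Fin (r+1)) =>
      Fin.cases (A i j) ((A.submatrix id g) i) k) = A.submatrix id h := by
    ext i k
    induction k using Fin.cases <;> simp [hh]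
  have hdet : (A.submatrix id h).det = 0 := by
    by_contra hne
    have hunit : IsUnit (A.submatrix id h) :=
      (Matrix.isUnit_iff_isUnit_det _).mpr (isUnit_iff_ne_zero.mpr hne)
    have hrk : (A.submatrix id h).rank = r + 1 := by
      rw [Matrix.rank_of_isUnit _ hunit, Fintype.card_fin]
    have hmul : A.submatrix id h = A * (1 : Matrix (Fin m) (Fin m) ℝ).submatrix id h := by
      ext i k
      simp [Matrix.mul_apply, Matrix.submatrix, Matrix.one_apply]
    have := Matrix.rank_mul_le_left A ((1 : Matrix (Fin m) (Fin m) ℝ).submatrix id h)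
    rw [← hmul, hrk] at this
    omega
  calc ∑ i, crossVec (A.submatrix id g) i * A i j
      = (Matrix.of fun i (k : Fin (r+1)) =>
          Fin.cases (A i j) ((A.submatrix id g) i) k).det := (det_cases _ _).symm
    _ = 0 := by rw [hmat, hdet]

lemma differentiableAt_det {n : ℕ} (M : ℝ → Matrix (Fin n) (Fin n) ℝ) (x : ℝ)
    (h : ∀ p q, DifferentiableAt ℝ (fun t => M t p q) x) :
    DifferentiableAt ℝ (fun t => (M t).det) x := by
  have heq : (fun t => (M t).det) =
      fun t => ∑ σ : Equiv.Perm (Fin n),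
        ((Equiv.Perm.sign σ : ℤ) : ℝ) * ∏ i, M t (σ i) i := by
    funext t
    rw [Matrix.det_apply']
  rw [heq]
  refine DifferentiableAt.fun_sum fun σ _ => ?_
  exact (DifferentiableAt.fun_finsetProd (u := Finset.univ) fun i _ => h (σ i) i).const_mul _

lemma QtM_mulVec {M k : ℕ} (c : Fin (k+1) → ℝ) (w : Fin M → ℝ) (i : Fin (M - k)) :
    (QtM M k c).mulVec w i
      = ∑ p : Fin (k+1), c p * w ⟨i.1 + p.1, by have := i.2; have := p.2; omega⟩ := by
  have h0 : (QtM M k c).mulVec w i = ∑ j : Fin M,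
      (if h : i.1 ≤ j.1 ∧ j.1 ≤ i.1 + k then c ⟨j.1 - i.1, by omega⟩ * w j else 0) := by
    rw [Matrix.mulVec, dotProduct]
    refine Finset.sum_congr rfl fun j _ => ?_
    simp only [QtM, Matrix.of_apply]
    by_cases h : i.1 ≤ j.1 ∧ j.1 ≤ i.1 + k
    · rw [dif_pos h, dif_pos h]
    · rw [dif_neg h, dif_neg h, zero_mul]
  rw [h0, sum_window c w i.1 (by have := i.2; omega)]

set_option maxHeartbeats 2000000 in
/-- Tangent directions of the rank-`r` variety: if `rank T_{r+1}(S) = r`,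
`a ≠ 0` with `Qᵀ(a)S = 0`, and `γ` is differentiable at `0` with `γ(0) = S` and
`rank T_{r+1}(γ(t)) ≤ r` near `0`, then `Qᵀ(a²) γ′(0) = 0`, i.e. every tangent
direction at `S` lies in `Z(a²)`. -/
theorem stmt14 (N r : ℕ) (hN : 2 * r < N) (S : Fin N → ℝ)
    (hS : (traj N (r + 1) S).rank = r)
    (a : Fin (r + 1) → ℝ) (ha : a ≠ 0) (haS : (QtM N r a).mulVec S = 0)
    (γ : ℝ → (Fin N → ℝ)) (v : Fin N → ℝ)
    (hγ : HasDerivAt γ v 0) (hγ0 : γ 0 = S)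
    (hrank : ∀ᶠ t in nhds (0 : ℝ), (traj N (r + 1) (γ t)).rank ≤ r) :
    (QtM N (r + r) (aconv r r a a)).mulVec v = 0 := by
  classical
  set T0 := traj N (r + 1) S with hT0
  -- Step A: choose r linearly independent columns of T0
  obtain ⟨b, hbsub, hbspan, hbind⟩ := exists_linearIndependent ℝ (Set.range T0ᵀ)
  have hbfin : b.Finite := (Set.finite_range T0ᵀ).subset hbsub
  haveI := hbfin.fintype
  have hrank0 : Module.finrank ℝ (Submodule.span ℝ (Set.range T0ᵀ)) = r := by
    rw [show Set.range T0ᵀ = Set.range T0.col from rfl, ← Matrix.range_mulVecLin]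
    exact hS
  have hcard : Fintype.card b = r := by
    have h1 := finrank_span_set_eq_card hbind
    rw [hbspan, hrank0] at h1
    exact (Set.toFinset_card b).symm.trans h1.symm
  have e : Fin r ≃ b := (Fintype.equivFinOfCardEq hcard).symm
  have hcol : ∀ q : Fin r, ∃ j, T0ᵀ j = ((e q : b) : Fin (r+1) → ℝ) := fun q => hbsub (e q).2
  choose J hJ using hcol
  have hindJ : LinearIndependent ℝ (fun q => T0ᵀ (J q)) := by
    have h2 : (fun q => T0ᵀ (J q)) = fun q => ((e q : b) : Fin (r+1) → ℝ) :=
      funext fun q => hJ q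
    rw [h2]
    exact hbind.comp e e.injective
  -- Step B: the cross vector of the chosen columns, as a function of t
  set Bfun : ℝ → Matrix (Fin (r+1)) (Fin r) ℝ :=
    fun t => (traj N (r + 1) (γ t)).submatrix id J with hBfun
  set c : ℝ → Fin (r+1) → ℝ := fun t => crossVec (Bfun t) with hc
  have hB0 : Bfun 0 = T0.submatrix id J := by rw [hBfun]; simp only [hγ0, hT0]
  have hc0 : c 0 = crossVec (T0.submatrix id J) := by
    rw [show c 0 = crossVec (Bfun 0) from rfl, hB0]
  -- c 0 is nonzero
  have hc0ne : c 0 ≠ 0 := by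
    intro h0
    have hfr : Module.finrank ℝ (Submodule.span ℝ (Set.range fun q => T0ᵀ (J q))) = r := by
      rw [finrank_span_eq_card hindJ, Fintype.card_fin]
    have hnet : Submodule.span ℝ (Set.range fun q => T0ᵀ (J q)) ≠ ⊤ := by
      intro hT
      rw [hT, finrank_top, Module.finrank_fin_fun] at hfr
      omega
    obtain ⟨x, hx⟩ : ∃ x, x ∉ Submodule.span ℝ (Set.range fun q => T0ᵀ (J q)) := by
      by_contra hcon
      push_neg at hcon
      exact hnet (Submodule.eq_top_iff'.mpr hcon)
    have hins : LinearIndependent ℝ (Fin.cons x fun q => T0ᵀ (J q)) :=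
      linearIndependent_fin_cons.mpr ⟨hindJ, hx⟩
    set E : Matrix (Fin (r+1)) (Fin (r+1)) ℝ := Matrix.of fun i (k : Fin (r+1)) =>
      Fin.cases (motive := fun _ => ℝ) (x i) ((T0.submatrix id J) i) k with hE
    have hET : (fun k => Eᵀ k) = Fin.cons x (fun q => T0ᵀ (J q)) := by
      funext k
      refine Fin.cases ?_ (fun q => ?_) k
      · funext i; simp [hE]
      · funext i; simp [hE, Matrix.submatrix]
    have hEcols : LinearIndependent ℝ (fun k => Eᵀ k) := by rw [hET]; exact hins
    have hunit : IsUnit E := Matrix.linearIndependent_cols_iff_isUnit.mp hEcols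
    have hdetne : E.det ≠ 0 := ((Matrix.isUnit_iff_isUnit_det E).mp hunit).ne_zero
    have hdz : E.det = 0 := by
      rw [hE, det_cases x (T0.submatrix id J), ← hc0, h0]
      simp
    exact hdetne hdz
  -- Step C: left kernel of T0 is one-dimensional, spanned by a; c 0 is a multiple of a
  have hmem : ∀ u : Fin (r+1) → ℝ,
      (∀ (m : ℕ) (hm : m + r < N),
        ∑ i : Fin (r+1), u i * S ⟨i.1 + m, by have := i.2; omega⟩ = 0) →
      u ∈ LinearMap.ker T0ᵀ.mulVecLin := by
    intro u hu
    rw [LinearMap.mem_ker]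
    funext j
    have hjm : j.1 + r < N := by have := j.2; omega
    simp only [Pi.zero_apply]
    calc T0ᵀ.mulVecLin u j
        = ∑ i : Fin (r+1), u i * S ⟨i.1 + j.1, by have := i.2; omega⟩ := by
          simp only [Matrix.mulVecLin_apply, Matrix.mulVec, dotProduct,
            Matrix.transpose_apply]
          exact Finset.sum_congr rfl fun i _ => mul_comm _ _
      _ = 0 := hu j.1 hjm
  have haS' : ∀ (m : ℕ) (hm : m + r < N),
      ∑ p : Fin (r+1), a p * S ⟨p.1 + m, by have := p.2; omega⟩ = 0 := by
    intro m hm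
    have h1 := congrFun haS ⟨m, by omega⟩
    rw [QtM_mulVec] at h1
    simp only [Pi.zero_apply] at h1
    rw [← h1]
    refine Finset.sum_congr rfl fun p _ => ?_
    congr 1
    exact fin_app_congr S (by omega)
  have haker : a ∈ LinearMap.ker T0ᵀ.mulVecLin := hmem a haS'
  have hc0S : ∀ (m : ℕ) (hm : m + r < N),
      ∑ i : Fin (r+1), c 0 i * S ⟨i.1 + m, by have := i.2; omega⟩ = 0 := by
    intro m hm
    have h1 := cross_dot T0 (le_of_eq hS) J ⟨m, by omega⟩
    rw [← hc0] at h1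
    exact h1
  have hcker : c 0 ∈ LinearMap.ker T0ᵀ.mulVecLin := hmem (c 0) hc0S
  have hker1 : Module.finrank ℝ (LinearMap.ker T0ᵀ.mulVecLin) = 1 := by
    have h2 := LinearMap.finrank_range_add_finrank_ker (T0ᵀ.mulVecLin)
    have h3 : Module.finrank ℝ (LinearMap.range T0ᵀ.mulVecLin) = r := by
      have h4 : T0ᵀ.rank = r := by rw [Matrix.rank_transpose]; exact hS
      exact h4
    rw [h3, Module.finrank_fin_fun] at h2
    omega
  have hsp : Submodule.span ℝ {a} = LinearMap.ker T0ᵀ.mulVecLin := by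
    apply Submodule.eq_of_le_of_finrank_le
      ((Submodule.span_singleton_le_iff_mem _ _).mpr haker)
    rw [hker1, finrank_span_singleton ha]
  obtain ⟨lam, hlam⟩ := Submodule.mem_span_singleton.mp (hsp ▸ hcker)
  have hlamne : lam ≠ 0 := by
    intro h0
    exact hc0ne (by rw [← hlam, h0, zero_smul])
  -- Step D: near 0, c t is in the left kernel of the trajectory matrix of γ t
  have hev : ∀ᶠ t in nhds (0:ℝ), ∀ (m : ℕ) (hm : m + r < N),
      ∑ i : Fin (r+1), c t i * γ t ⟨i.1 + m, by have := i.2; omega⟩ = 0 := by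
    filter_upwards [hrank] with t ht
    intro m hm
    exact cross_dot (traj N (r + 1) (γ t)) ht J ⟨m, by omega⟩
  -- Step E: differentiability
  have hvj : ∀ j, HasDerivAt (fun t => γ t j) (v j) 0 := hasDerivAt_pi.mp hγ
  have hcdiff : ∀ i, DifferentiableAt ℝ (fun t => c t i) 0 := by
    intro i
    have heq : (fun t => c t i) = fun t =>
        (-1)^(i:ℕ) * ((Bfun t).submatrix i.succAbove id).det := rfl
    rw [heq]
    refine DifferentiableAt.const_mul ?_ _
    exact differentiableAt_det _ _ fun p q => (hvj _).differentiableAt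
  set d : Fin (r+1) → ℝ := fun i => deriv (fun t => c t i) 0 with hdd
  have hcd : ∀ i, HasDerivAt (fun t => c t i) (d i) 0 := fun i => (hcdiff i).hasDerivAt
  -- Step F: differentiate the kernel relation
  have key : ∀ (m : ℕ) (hm : m + r < N),
      ∑ i : Fin (r+1), (d i * S ⟨i.1 + m, by have := i.2; omega⟩
        + c 0 i * v ⟨i.1 + m, by have := i.2; omega⟩) = 0 := by
    intro m hm
    have hder : HasDerivAt
        (fun t => ∑ i : Fin (r+1), c t i * γ t ⟨i.1 + m, by have := i.2; omega⟩)
        (∑ i : Fin (r+1), (d i * S ⟨i.1 + m, by have := i.2; omega⟩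
          + c 0 i * v ⟨i.1 + m, by have := i.2; omega⟩)) 0 := by
      refine HasDerivAt.fun_sum fun i _ => ?_
      have h2 := (hcd i).mul (hvj ⟨i.1 + m, by have := i.2; omega⟩)
      rw [hγ0] at h2
      exact h2
    have hzero : HasDerivAt
        (fun t => ∑ i : Fin (r+1), c t i * γ t ⟨i.1 + m, by have := i.2; omega⟩)
        0 0 := by
      refine (hasDerivAt_const (0:ℝ) (0:ℝ)).congr_of_eventuallyEq ?_
      filter_upwards [hev] with t ht
      exact ht m hm
    exact hder.unique hzero
  -- Step G: conclude
  funext i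
  simp only [Pi.zero_apply]
  rw [QtM_mulVec]
  have hY : ∑ m_ : Fin (r+r+1), aconv r r (c 0) (c 0) m_ *
      v ⟨i.1 + m_.1, by have := m_.2; have := i.2; omega⟩ = 0 := by
    have hsplit : ∀ m_ : Fin (r+r+1),
        aconv r r (c 0) (c 0) m_ * v ⟨i.1 + m_.1, by have := m_.2; have := i.2; omega⟩
        = ∑ j : Fin (r+1), (if h : j.1 ≤ m_.1 ∧ m_.1 ≤ j.1 + r
            then (c 0 j * c 0 ⟨m_.1 - j.1, by omega⟩) *
              v ⟨i.1 + m_.1, by have := m_.2; have := i.2; omega⟩ else 0) := by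
      intro m_
      simp only [aconv]
      rw [Finset.sum_mul]
      refine Finset.sum_congr rfl fun j _ => ?_
      by_cases h : j.1 ≤ m_.1 ∧ m_.1 ≤ j.1 + r
      · rw [dif_pos h, dif_pos h]
      · rw [dif_neg h, dif_neg h, zero_mul]
    calc ∑ m_ : Fin (r+r+1), aconv r r (c 0) (c 0) m_ *
          v ⟨i.1 + m_.1, by have := m_.2; have := i.2; omega⟩
        = ∑ m_ : Fin (r+r+1), ∑ j : Fin (r+1),
            (if h : j.1 ≤ m_.1 ∧ m_.1 ≤ j.1 + r
              then (c 0 j * c 0 ⟨m_.1 - j.1, by omega⟩) *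
                v ⟨i.1 + m_.1, by have := m_.2; have := i.2; omega⟩ else 0) :=
          Finset.sum_congr rfl fun m_ _ => hsplit m_
      _ = ∑ j : Fin (r+1), ∑ m_ : Fin (r+r+1),
            (if h : j.1 ≤ m_.1 ∧ m_.1 ≤ j.1 + r
              then (c 0 j * c 0 ⟨m_.1 - j.1, by omega⟩) *
                v ⟨i.1 + m_.1, by have := m_.2; have := i.2; omega⟩ else 0) :=
          Finset.sum_comm
      _ = ∑ j : Fin (r+1), ∑ p : Fin (r+1), (c 0 j * c 0 p) *
            v ⟨i.1 + (j.1 + p.1), by have := i.2; have := j.2; have := p.2; omega⟩ :=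
          Finset.sum_congr rfl fun j _ =>
            sum_window (fun p => c 0 j * c 0 p)
              (fun m_ : Fin (r+r+1) =>
                v ⟨i.1 + m_.1, by have := m_.2; have := i.2; omega⟩)
              j.1 (by have := j.2; omega)
      _ = ∑ j : Fin (r+1), c 0 j * ∑ p : Fin (r+1), c 0 p *
            v ⟨p.1 + (i.1 + j.1), by have := i.2; have := j.2; have := p.2; omega⟩ := by
          refine Finset.sum_congr rfl fun j _ => ?_
          rw [Finset.mul_sum]
          refine Finset.sum_congr rfl fun p _ => ?_
          rw [mul_assoc]
          congr 1
          congr 1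
          exact fin_app_congr v (by omega)
      _ = ∑ j : Fin (r+1), c 0 j * (-(∑ p : Fin (r+1), d p *
            S ⟨p.1 + (i.1 + j.1), by have := i.2; have := j.2; have := p.2; omega⟩)) := by
          refine Finset.sum_congr rfl fun j _ => ?_
          congr 1
          have hk := key (i.1 + j.1) (by have := i.2; have := j.2; omega)
          rw [Finset.sum_add_distrib] at hk
          linarith
      _ = -∑ j : Fin (r+1), ∑ p : Fin (r+1), c 0 j * (d p *
            S ⟨p.1 + (i.1 + j.1), by have := i.2; have := j.2; have := p.2; omega⟩) := by
          rw [← Finset.sum_neg_distrib]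
          exact Finset.sum_congr rfl fun j _ => by rw [mul_neg, Finset.mul_sum]
      _ = -∑ p : Fin (r+1), d p * ∑ j : Fin (r+1), c 0 j *
            S ⟨j.1 + (p.1 + i.1), by have := i.2; have := j.2; have := p.2; omega⟩ := by
          congr 1
          rw [Finset.sum_comm]
          refine Finset.sum_congr rfl fun p _ => ?_
          rw [Finset.mul_sum]
          refine Finset.sum_congr rfl fun j _ => ?_
          rw [fin_app_congr S (hy := by have := i.2; have := j.2; have := p.2; omega)
              (show p.1 + (i.1 + j.1) = j.1 + (p.1 + i.1) by omega)]
          ring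
      _ = 0 := by
          rw [show ∑ p : Fin (r+1), d p * ∑ j : Fin (r+1), c 0 j *
              S ⟨j.1 + (p.1 + i.1), by have := i.2; have := j.2; have := p.2; omega⟩
              = ∑ p : Fin (r+1), d p * (0:ℝ) from
            Finset.sum_congr rfl fun p _ => by
              rw [hc0S (p.1 + i.1) (by have := i.2; have := p.2; omega)]]
          simp
  have hconv : ∀ m_ : Fin (r+r+1),
      aconv r r (c 0) (c 0) m_ = lam^2 * aconv r r a a m_ := by
    intro m_
    simp only [aconv]
    rw [Finset.mul_sum]
    refine Finset.sum_congr rfl fun j _ => ?_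
    by_cases h : j.1 ≤ m_.1 ∧ m_.1 ≤ j.1 + r
    · rw [dif_pos h, dif_pos h, ← hlam]
      simp only [Pi.smul_apply, smul_eq_mul]
      ring
    · rw [dif_neg h, dif_neg h, mul_zero]
  have h5 : ∑ m_ : Fin (r+r+1), aconv r r (c 0) (c 0) m_ *
        v ⟨i.1 + m_.1, by have := m_.2; have := i.2; omega⟩
      = lam^2 * ∑ m_ : Fin (r+r+1), aconv r r a a m_ *
        v ⟨i.1 + m_.1, by have := m_.2; have := i.2; omega⟩ := by
    rw [Finset.mul_sum]
    refine Finset.sum_congr rfl fun m_ _ => ?_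
    rw [hconv m_]
    ring
  rw [h5] at hY
  rcases mul_eq_zero.mp hY with h | h
  · exact absurd h (pow_ne_zero 2 hlamne)
  · exact h
end
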